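/- arXiv:2304.02297 — 7 statements merged into one kernel-verified Lean document; each statement's English description precedes it below -/
import Mathlib

section
/- Fix n, n_u, n_y ∈ ℕ, matrices A ∈ ℝ^{n×n}, B ∈ ℝ^{n×n_u}, C ∈ ℝ^{n_y×n}, D ∈ ℝ^{n_y×n_u}, and integers T_ini ≥ 1, L ≥ 0. Assume the observability matrix O_{T_ini} has rank n. Then for every trajectory (u^ini, y^ini) of length T_ini of the LTI system (A,B,C,D) and every input sequence u_0,…,u_L ∈ ℝ^{n_u}, there exists exactly one output sequence y_0,…,y_L ∈ ℝ^{n_y} such that the concatenation (u^ini ∧ u, y^ini ∧ y), a pair of sequences of length T_ini + L + 1, is a trajectory of the LTI system (A,B,C,D). -/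
open Matrix

/-- `(u, y)` is a trajectory of length `N` of the LTI system `(A, B, C, D)`:
there exist states `x_0, …, x_{N-1}` with `x_{t+1} = A x_t + B u_t` for `t ≤ N-2`
and `y_t = C x_t + D u_t` for `t ≤ N-1`. (Only the first `N` values of `u, y` matter.) -/
def IsTrajectory {n nu ny : ℕ} (A : Matrix (Fin n) (Fin n) ℝ) (B : Matrix (Fin n) (Fin nu) ℝ)
    (C : Matrix (Fin ny) (Fin n) ℝ) (D : Matrix (Fin ny) (Fin nu) ℝ) (N : ℕ)
    (u : ℕ → Fin nu → ℝ) (y : ℕ → Fin ny → ℝ) : Prop :=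
  ∃ x : ℕ → Fin n → ℝ,
    (∀ t, t + 1 < N → x (t + 1) = A.mulVec (x t) + B.mulVec (u t)) ∧
    (∀ t, t < N → y t = C.mulVec (x t) + D.mulVec (u t))

/-- The observability matrix of depth `ℓ`: the block matrix `[C; CA; …; CA^{ℓ-1}]`. -/
def obsMat {n ny : ℕ} (A : Matrix (Fin n) (Fin n) ℝ) (C : Matrix (Fin ny) (Fin n) ℝ)
    (ℓ : ℕ) : Matrix (Fin ℓ × Fin ny) (Fin n) ℝ :=
  Matrix.of fun p j => (C * A ^ (p.1 : ℕ)) p.2 j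

/-- Concatenation of a sequence of length `Na` with a subsequent sequence. -/
def concat {α : Type*} (Na : ℕ) (wa wb : ℕ → α) : ℕ → α :=
  fun t => if t < Na then wa t else wb (t - Na)

lemma mulVec_inj_of_rank {m : Type*} [Fintype m] {n : ℕ} (M : Matrix m (Fin n) ℝ)
    (h : M.rank = n) : ∀ v : Fin n → ℝ, M.mulVec v = 0 → v = 0 := by
  intro v hv
  have hrn := LinearMap.finrank_range_add_finrank_ker M.mulVecLin
  rw [Matrix.rank] at h
  rw [h, Module.finrank_fintype_fun_eq_card, Fintype.card_fin] at hrn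
  have hk : Module.finrank ℝ (LinearMap.ker M.mulVecLin) = 0 := by omega
  have hb : LinearMap.ker M.mulVecLin = ⊥ := Submodule.finrank_eq_zero.mp hk
  have hm : v ∈ LinearMap.ker M.mulVecLin := hv
  rw [hb] at hm
  simpa using hm

/-- If the observability matrix of depth `T_ini` has rank `n`, then for every trajectory
`(u^ini, y^ini)` of length `T_ini` and every input sequence `u_0, …, u_L`, there is exactly
one output sequence `y_0, …, y_L` such that the concatenation `(u^ini ∧ u, y^ini ∧ y)` is a
trajectory of length `T_ini + L + 1` of the LTI system `(A, B, C, D)`. -/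
theorem unique_continuation {n nu ny : ℕ}
    (A : Matrix (Fin n) (Fin n) ℝ) (B : Matrix (Fin n) (Fin nu) ℝ)
    (C : Matrix (Fin ny) (Fin n) ℝ) (D : Matrix (Fin ny) (Fin nu) ℝ)
    (Tini L : ℕ) (hTini : 1 ≤ Tini)
    (hrank : (obsMat A C Tini).rank = n)
    (uini : ℕ → Fin nu → ℝ) (yini : ℕ → Fin ny → ℝ)
    (hini : IsTrajectory A B C D Tini uini yini)
    (u : ℕ → Fin nu → ℝ) :
    ∃ y : ℕ → Fin ny → ℝ,
      IsTrajectory A B C D (Tini + L + 1) (concat Tini uini u) (concat Tini yini y) ∧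
      ∀ y' : ℕ → Fin ny → ℝ,
        IsTrajectory A B C D (Tini + L + 1) (concat Tini uini u) (concat Tini yini y') →
        ∀ t ≤ L, y' t = y t := by
  obtain ⟨x0, hx0dyn, hx0out⟩ := hini
  set w : ℕ → Fin nu → ℝ := concat Tini uini u with hw
  -- extended state
  let x : ℕ → Fin n → ℝ := fun t =>
    Nat.rec (x0 0) (fun t xt => A.mulVec xt + B.mulVec (w t)) t
  have hxsucc : ∀ t, x (t + 1) = A.mulVec (x t) + B.mulVec (w t) := fun t => rfl
  have hxeq : ∀ t, t < Tini → x t = x0 t := by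
    intro t ht
    induction t with
    | zero => rfl
    | succ t ih =>
      have ht' : t < Tini := Nat.lt_of_succ_lt ht
      rw [hx0dyn t ht, hxsucc t, ih ht']
      have : w t = uini t := by simp [hw, concat, ht']
      rw [this]
  refine ⟨fun t => C.mulVec (x (Tini + t)) + D.mulVec (u t), ⟨x, fun t _ => hxsucc t, ?_⟩, ?_⟩
  · intro t ht
    by_cases h : t < Tini
    · simp only [concat, if_pos h]
      rw [hx0out t h, hxeq t h]
      have hwu : w t = uini t := by simp [hw, concat, h]
      rw [hwu]
    · simp only [concat, if_neg h]
      have h2 : Tini + (t - Tini) = t := by omega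
      have hwu : w t = u (t - Tini) := by simp [hw, concat, h]
      rw [h2, hwu]
  · rintro y' ⟨x', hx'dyn, hx'out⟩ t htL
    set N := Tini + L + 1 with hN
    -- difference of states
    have hTN : Tini ≤ N := by omega
    have hout : ∀ s, s < Tini → C.mulVec (x s) = C.mulVec (x' s) := by
      intro s hs
      have h1 : concat Tini yini y' s = C.mulVec (x' s) + D.mulVec (w s) :=
        hx'out s (by omega)
      have h2 : concat Tini yini y' s = yini s := by simp [concat, hs]
      have h3 : yini s = C.mulVec (x0 s) + D.mulVec (uini s) := hx0out s hs
      have h4 : w s = uini s := by simp [hw, concat, hs]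
      rw [h2, h3, h4] at h1
      rw [hxeq s hs]
      exact add_right_cancel h1
    have hd : ∀ s, s < N → x s - x' s = (A ^ s).mulVec (x 0 - x' 0) := by
      intro s hs
      induction s with
      | zero => simp
      | succ s ih =>
        have hs' : s < N := by omega
        rw [hxsucc s, hx'dyn s (by omega), pow_succ']
        have : A.mulVec (x s) + B.mulVec (w s) - (A.mulVec (x' s) + B.mulVec (w s))
            = A.mulVec (x s - x' s) := by
          rw [Matrix.mulVec_sub]; abel
        rw [this, ih hs', Matrix.mulVec_mulVec]
    have hd0 : x 0 - x' 0 = 0 := by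
      apply mulVec_inj_of_rank _ hrank
      funext p
      obtain ⟨i, k⟩ := p
      have hi : (i : ℕ) < Tini := i.isLt
      have h1 : ((obsMat A C Tini).mulVec (x 0 - x' 0)) (i, k)
          = ((C * A ^ (i : ℕ)).mulVec (x 0 - x' 0)) k := by
        simp [obsMat, Matrix.mulVec, dotProduct]
      rw [h1, ← Matrix.mulVec_mulVec, ← hd i (by omega), Matrix.mulVec_sub]
      have := hout i hi
      simp [this]
    have hxx' : ∀ s, s < N → x s = x' s := by
      intro s hs
      have h := hd s hs
      rw [hd0] at h
      simp only [Matrix.mulVec_zero] at h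
      exact sub_eq_zero.mp h
    have hTt : Tini + t < N := by omega
    have h1 := hx'out (Tini + t) hTt
    have h2 : concat Tini yini y' (Tini + t) = y' t := by
      simp [concat]
    have h3 : w (Tini + t) = u t := by
      simp [hw, concat]
    rw [h2, h3, ← hxx' (Tini + t) hTt] at h1
    exact h1
end

section
/- Fix n, n_u, n_y ∈ ℕ, matrices A ∈ ℝ^{n×n}, B ∈ ℝ^{n×n_u}, C ∈ ℝ^{n_y×n}, D ∈ ℝ^{n_y×n_u}. Let (u^d, y^d) be a trajectory of length N of the LTI system (A,B,C,D) and let 1 ≤ ℓ ≤ N. Then for every α ∈ ℝ^{N−ℓ+1}, the pair of sequences (u, y) of length ℓ defined blockwise by the products H_ℓ(u^d) α and H_ℓ(y^d) α (i.e., u_t = Σ_{j=0}^{N−ℓ} α_j u^d_{t+j} and y_t = Σ_{j=0}^{N−ℓ} α_j y^d_{t+j} for 0 ≤ t ≤ ℓ−1) is again a trajectory of length ℓ of the LTI system (A,B,C,D). -/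
open Matrix

/-- Any linear combination of the columns of the Hankel matrices built from a
system trajectory `(u^d, y^d)` of length `N`, i.e. the pair of sequences
`u_t = ∑_j α_j u^d_{t+j}` and `y_t = ∑_j α_j y^d_{t+j}` for `0 ≤ t ≤ ℓ-1`,
is again a trajectory of length `ℓ` of the LTI system. -/
theorem hankel_combination_is_trajectory {n nu ny : ℕ}
    (A : Matrix (Fin n) (Fin n) ℝ) (B : Matrix (Fin n) (Fin nu) ℝ)
    (C : Matrix (Fin ny) (Fin n) ℝ) (D : Matrix (Fin ny) (Fin nu) ℝ)
    (N : ℕ) (ud : ℕ → Fin nu → ℝ) (yd : ℕ → Fin ny → ℝ)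
    (hdata : IsTrajectory A B C D N ud yd)
    (ℓ : ℕ) (hℓ : 1 ≤ ℓ) (hℓN : ℓ ≤ N)
    (α : Fin (N - ℓ + 1) → ℝ) :
    IsTrajectory A B C D ℓ
      (fun t k => ∑ j : Fin (N - ℓ + 1), α j * ud (t + (j : ℕ)) k)
      (fun t k => ∑ j : Fin (N - ℓ + 1), α j * yd (t + (j : ℕ)) k) := by
  obtain ⟨xd, hx, hy⟩ := hdata
  refine ⟨fun t k => ∑ j : Fin (N - ℓ + 1), α j * xd (t + (j : ℕ)) k, ?_, ?_⟩
  · intro t ht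
    have hb : ∀ j : Fin (N - ℓ + 1), t + (j : ℕ) + 1 < N := by
      intro j
      have hj : (j : ℕ) ≤ N - ℓ := Nat.lt_succ_iff.mp j.isLt
      omega
    funext k
    have key : ∀ j : Fin (N - ℓ + 1),
        xd (t + 1 + (j : ℕ)) k = (A.mulVec (xd (t + (j : ℕ))) + B.mulVec (ud (t + (j : ℕ)))) k := by
      intro j
      have := hx (t + (j : ℕ)) (hb j)
      rw [show t + 1 + (j : ℕ) = t + (j : ℕ) + 1 by ring, this]
    simp only [key, Pi.add_apply, mulVec, dotProduct, Finset.mul_sum, mul_add,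
      Finset.sum_add_distrib]
    rw [Finset.sum_comm, Finset.sum_comm (γ := Fin nu)]
    congr 1 <;>
      exact Finset.sum_congr rfl fun i _ => Finset.sum_congr rfl fun j _ => by ring
  · intro t ht
    have hb : ∀ j : Fin (N - ℓ + 1), t + (j : ℕ) < N := by
      intro j
      have hj : (j : ℕ) ≤ N - ℓ := Nat.lt_succ_iff.mp j.isLt
      omega
    funext k
    have key : ∀ j : Fin (N - ℓ + 1),
        yd (t + (j : ℕ)) k = (C.mulVec (xd (t + (j : ℕ))) + D.mulVec (ud (t + (j : ℕ)))) k := by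
      intro j; rw [hy (t + (j : ℕ)) (hb j)]
    simp only [key, Pi.add_apply, mulVec, dotProduct, Finset.mul_sum, mul_add,
      Finset.sum_add_distrib]
    rw [Finset.sum_comm, Finset.sum_comm (γ := Fin nu)]
    congr 1 <;>
      exact Finset.sum_congr rfl fun i _ => Finset.sum_congr rfl fun j _ => by ring
end

section
/- Fix n, n_u ∈ ℕ, A ∈ ℝ^{n×n}, B ∈ ℝ^{n×n_u}, and integers ℓ ≥ 1, N ≥ ℓ + n. Assume the pair (A,B) is controllable. Let u_0,…,u_{N−1} ∈ ℝ^{n_u} and let x_0,…,x_{N−1} ∈ ℝ^n satisfy x_{t+1} = A x_t + B u_t for 0 ≤ t ≤ N−2. If the sequence u is persistently exciting of order ℓ + n, then the (n + ℓ n_u) × (N−ℓ+1) matrix obtained by stacking the row of states [x_0, x_1, …, x_{N−ℓ}] on top of the Hankel matrix H_ℓ(u) has full row rank n + ℓ n_u. -/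
open Matrix

/-- The Hankel matrix of depth `ℓ` with `m` columns of a vector sequence `z`:
the `((i,k), j)` entry is `z_{i+j} k`. (For a sequence of length `N` one takes
`m = N - ℓ + 1`.) -/
def hankel {nz : ℕ} (ℓ m : ℕ) (z : ℕ → Fin nz → ℝ) : Matrix (Fin ℓ × Fin nz) (Fin m) ℝ :=
  Matrix.of fun p j => z ((p.1 : ℕ) + (j : ℕ)) p.2

/-- The controllability matrix `[B, AB, …, A^{n-1}B]`. -/
def ctrbMat {n nu : ℕ} (A : Matrix (Fin n) (Fin n) ℝ) (B : Matrix (Fin n) (Fin nu) ℝ) :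
    Matrix (Fin n) (Fin n × Fin nu) ℝ :=
  Matrix.of fun i p => (A ^ (p.1 : ℕ) * B) i p.2

/-- A matrix with rank equal to its number of rows has trivial left kernel. -/
lemma rank_aux1 {m n : Type*} [Fintype m] [Fintype n] [DecidableEq m] (M : Matrix m n ℝ)
    (h : M.rank = Fintype.card m) : ∀ v, M.vecMul v = 0 → v = 0 := by
  intro v hv
  have ht : Mᵀ.rank = Fintype.card m := by rw [Matrix.rank_transpose]; exact h
  have hker : LinearMap.ker Mᵀ.mulVecLin = ⊥ := by
    have h1 := LinearMap.finrank_range_add_finrank_ker Mᵀ.mulVecLin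
    rw [Module.finrank_pi ℝ] at h1
    have h2 : Module.finrank ℝ (LinearMap.range Mᵀ.mulVecLin) = Fintype.card m := ht
    rw [h2] at h1
    have h3 : Module.finrank ℝ (LinearMap.ker Mᵀ.mulVecLin) = 0 := by omega
    exact Submodule.finrank_eq_zero.mp h3
  have hmem : Mᵀ.mulVecLin v = 0 := by
    rw [Matrix.mulVecLin_apply, Matrix.mulVec_transpose, hv]
  rw [← LinearMap.mem_ker, hker, Submodule.mem_bot] at hmem
  exact hmem

/-- A matrix with trivial left kernel has rank equal to its number of rows. -/
lemma rank_aux2 {m n : Type*} [Fintype m] [Fintype n] [DecidableEq m] (M : Matrix m n ℝ)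
    (h : ∀ v, M.vecMul v = 0 → v = 0) : M.rank = Fintype.card m := by
  rw [← Matrix.rank_transpose]
  have hinj : Function.Injective Mᵀ.mulVecLin := by
    rw [← LinearMap.ker_eq_bot]
    apply (Submodule.eq_bot_iff _).mpr
    intro v hv
    apply h
    rw [← Matrix.mulVec_transpose]
    exact hv
  have hr : Mᵀ.rank = Module.finrank ℝ (LinearMap.range Mᵀ.mulVecLin) := rfl
  rw [hr, LinearMap.finrank_range_of_inj hinj, Module.finrank_pi]

/-- If `(A, B)` is controllable, the states obey `x_{t+1} = A x_t + B u_t`, and the input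
sequence `u_0, …, u_{N-1}` is persistently exciting of order `ℓ + n`, then the matrix
obtained by stacking the row of states `[x_0, …, x_{N-ℓ}]` on top of the Hankel matrix
`H_ℓ(u)` has full row rank `n + ℓ n_u`. -/
theorem state_input_hankel_full_rank {n nu : ℕ}
    (A : Matrix (Fin n) (Fin n) ℝ) (B : Matrix (Fin n) (Fin nu) ℝ)
    (hctrb : (ctrbMat A B).rank = n)
    (ℓ N : ℕ) (hℓ : 1 ≤ ℓ) (hN : ℓ + n ≤ N)
    (u : ℕ → Fin nu → ℝ) (x : ℕ → Fin n → ℝ)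
    (hx : ∀ t, t + 1 < N → x (t + 1) = A.mulVec (x t) + B.mulVec (u t))
    (hPE : (hankel (ℓ + n) (N - (ℓ + n) + 1) u).rank = (ℓ + n) * nu) :
    (Matrix.fromRows
        (Matrix.of fun (i : Fin n) (j : Fin (N - ℓ + 1)) => x (j : ℕ) i)
        (hankel ℓ (N - ℓ + 1) u)).rank = n + ℓ * nu := by
  classical
  have hcard : n + ℓ * nu = Fintype.card (Fin n ⊕ Fin ℓ × Fin nu) := by simp
  rw [hcard]
  apply rank_aux2
  intro v hv
  -- coefficients of the characteristic polynomial
  set c : ℕ → ℝ := fun k => A.charpoly.coeff k with hcdef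
  have hdeg : A.charpoly.natDegree = n := by
    rw [Matrix.charpoly_natDegree_eq_dim, Fintype.card_fin]
  have hcn : c n = 1 := by
    have h1 := (Matrix.charpoly_monic A).coeff_natDegree
    rwa [hdeg] at h1
  have hCH : ∑ k ∈ Finset.range (n + 1), c k • A ^ k = 0 := by
    have h0 := Matrix.aeval_self_charpoly A
    rw [Polynomial.aeval_eq_sum_range, hdeg] at h0
    exact h0
  have hCHentry : ∀ s r, ∑ k ∈ Finset.range (n + 1), c k * (A ^ k) s r = 0 := by
    intro s r
    have h0 := congrFun (congrFun hCH s) r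
    simpa [Finset.sum_apply, Matrix.sum_apply, smul_eq_mul] using h0
  -- the two parts of the kernel vector
  set ξ₀ : Fin n → ℝ := fun i => v (Sum.inl i) with hξ₀def
  set ξ₁ : ℕ → Fin nu → ℝ :=
    fun a => if h : a < ℓ then (fun b => v (Sum.inr (⟨a, h⟩, b))) else 0 with hξ₁def
  have hξ₁big : ∀ a, ℓ ≤ a → ξ₁ a = 0 := by
    intro a ha
    simp [hξ₁def, Nat.not_lt.mpr ha]
  -- local dot-product linearity lemmas
  have dot_sum : ∀ (w : Fin n → ℝ) (s : Finset ℕ) (f : ℕ → Fin n → ℝ),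
      w ⬝ᵥ (∑ t ∈ s, f t) = ∑ t ∈ s, w ⬝ᵥ f t := by
    intro w s f
    simp only [dotProduct, Finset.sum_apply, Finset.mul_sum]
    exact Finset.sum_comm
  have sum_dot : ∀ {α : Type} [Fintype α] (s : Finset ℕ) (f : ℕ → α → ℝ) (w : α → ℝ),
      (∑ t ∈ s, f t) ⬝ᵥ w = ∑ t ∈ s, f t ⬝ᵥ w := by
    intro α _ s f w
    simp only [dotProduct, Finset.sum_apply, Finset.sum_mul]
    exact Finset.sum_comm
  -- the column relations from the kernel hypothesis
  have hR : ∀ j, j ≤ N - ℓ →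
      ξ₀ ⬝ᵥ x j + ∑ a ∈ Finset.range ℓ, ξ₁ a ⬝ᵥ u (a + j) = 0 := by
    intro j hj
    have hcol := congrFun hv (⟨j, by omega⟩ : Fin (N - ℓ + 1))
    simp only [Matrix.vecMul, dotProduct, Fintype.sum_sum_type, Fintype.sum_prod_type,
      Matrix.fromRows_apply_inl, Matrix.fromRows_apply_inr, Matrix.of_apply, hankel,
      Pi.zero_apply] at hcol
    rw [← hcol]
    congr 1
    rw [← Fin.sum_univ_eq_sum_range (fun a => ξ₁ a ⬝ᵥ u (a + j)) ℓ]
    apply Finset.sum_congr rfl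
    intro a _
    simp only [dotProduct, hξ₁def]
    rw [dif_pos a.isLt]
  -- state evolution formula
  have hxdyn : ∀ k j, j + k < N → x (j + k) =
      (A ^ k) *ᵥ x j + ∑ i ∈ Finset.range k, (A ^ (k - 1 - i) * B) *ᵥ u (j + i) := by
    intro k
    induction k with
    | zero => intro j _; simp
    | succ k ih =>
      intro j hj
      have h2 : x (j + (k + 1)) = A *ᵥ x (j + k) + B *ᵥ u (j + k) := by
        have h3 := hx (j + k) (by omega)
        rwa [show j + k + 1 = j + (k + 1) by omega] at h3
      rw [h2, ih j (by omega), Matrix.mulVec_add, Finset.sum_range_succ]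
      have hsum : A *ᵥ (∑ i ∈ Finset.range k, (A ^ (k - 1 - i) * B) *ᵥ u (j + i))
          = ∑ i ∈ Finset.range k, (A ^ (k + 1 - 1 - i) * B) *ᵥ u (j + i) := by
        rw [← Matrix.mulVecLin_apply, map_sum]
        apply Finset.sum_congr rfl
        intro i hi
        have hik : i < k := Finset.mem_range.mp hi
        rw [Matrix.mulVecLin_apply, Matrix.mulVec_mulVec, ← Matrix.mul_assoc, ← pow_succ',
          show k - 1 - i + 1 = k + 1 - 1 - i by omega]
      rw [hsum, Matrix.mulVec_mulVec, ← pow_succ']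
      have hlast : (A ^ (k + 1 - 1 - k) * B) *ᵥ u (j + k) = B *ᵥ u (j + k) := by
        rw [show k + 1 - 1 - k = 0 by omega, pow_zero, Matrix.one_mul]
      rw [hlast]
      abel
  -- the combined coefficient vectors
  set φ : ℕ → ℕ → Fin nu → ℝ := fun k i =>
    (if i < k then ξ₀ ᵥ* (A ^ (k - 1 - i) * B) else 0)
      + (if k ≤ i then ξ₁ (i - k) else 0) with hφdef
  -- shifted relations
  have hS : ∀ k, k ≤ n → ∀ j, j ≤ N - ℓ - n →
      (ξ₀ ᵥ* A ^ k) ⬝ᵥ x j + ∑ i ∈ Finset.range (ℓ + n), φ k i ⬝ᵥ u (i + j) = 0 := by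
    intro k hk j hj
    have hRjk := hR (j + k) (by omega)
    rw [hxdyn k j (by omega), dotProduct_add, dot_sum] at hRjk
    simp only [Matrix.dotProduct_mulVec] at hRjk
    have key : ∑ i ∈ Finset.range (ℓ + n), φ k i ⬝ᵥ u (i + j)
        = (∑ i ∈ Finset.range k, (ξ₀ ᵥ* (A ^ (k - 1 - i) * B)) ⬝ᵥ u (j + i))
          + ∑ a ∈ Finset.range ℓ, ξ₁ a ⬝ᵥ u (a + (j + k)) := by
      have split : ∀ i, φ k i ⬝ᵥ u (i + j) =
          (if i < k then (ξ₀ ᵥ* (A ^ (k - 1 - i) * B)) ⬝ᵥ u (i + j) else 0)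
          + (if k ≤ i then ξ₁ (i - k) ⬝ᵥ u (i + j) else 0) := by
        intro i
        simp only [hφdef, add_dotProduct]
        congr 1 <;> split <;> simp
      rw [Finset.sum_congr rfl (fun i _ => split i), Finset.sum_add_distrib]
      congr 1
      · rw [← Finset.sum_filter]
        have hfil : (Finset.range (ℓ + n)).filter (fun i => i < k) = Finset.range k := by
          ext i; simp; omega
        rw [hfil]
        apply Finset.sum_congr rfl
        intro i _
        rw [show i + j = j + i by omega]
      · rw [← Finset.sum_filter]
        have hfil : (Finset.range (ℓ + n)).filter (fun i => k ≤ i) = Finset.Ico k (ℓ + n) := by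
          ext i; simp; omega
        rw [hfil, Finset.sum_Ico_eq_sum_range]
        have h1 : ∀ d, ξ₁ (k + d - k) ⬝ᵥ u (k + d + j) = ξ₁ d ⬝ᵥ u (d + (j + k)) := by
          intro d
          rw [show k + d - k = d by omega, show k + d + j = d + (j + k) by omega]
        rw [Finset.sum_congr rfl (fun d _ => h1 d)]
        symm
        apply Finset.sum_subset (Finset.range_subset_range.mpr (by omega))
        intro d _ hd2
        have hld : ℓ ≤ d := by simpa using hd2
        rw [hξ₁big d hld, zero_dotProduct]
    rw [key, ← add_assoc]
    exact hRjk
  -- summing against the Cayley–Hamilton coefficients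
  have hpart1 : ∀ j, ∑ k ∈ Finset.range (n + 1), c k * ((ξ₀ ᵥ* A ^ k) ⬝ᵥ x j) = 0 := by
    intro j
    have hzero : ∑ k ∈ Finset.range (n + 1), c k • (ξ₀ ᵥ* A ^ k) = (0 : Fin n → ℝ) := by
      funext r
      rw [Finset.sum_apply]
      simp only [Pi.smul_apply, smul_eq_mul, Matrix.vecMul, dotProduct, Pi.zero_apply,
        Finset.mul_sum]
      rw [Finset.sum_comm]
      apply Finset.sum_eq_zero
      intro s _
      have h2 := hCHentry s r
      calc ∑ k ∈ Finset.range (n + 1), c k * (ξ₀ s * (A ^ k) s r)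
          = ξ₀ s * ∑ k ∈ Finset.range (n + 1), c k * (A ^ k) s r := by
            rw [Finset.mul_sum]
            apply Finset.sum_congr rfl
            intro k _
            ring
        _ = 0 := by rw [h2, mul_zero]
    calc ∑ k ∈ Finset.range (n + 1), c k * ((ξ₀ ᵥ* A ^ k) ⬝ᵥ x j)
        = ∑ k ∈ Finset.range (n + 1), (c k • (ξ₀ ᵥ* A ^ k)) ⬝ᵥ x j := by
          apply Finset.sum_congr rfl
          intro k _
          rw [smul_dotProduct, smul_eq_mul]
      _ = (∑ k ∈ Finset.range (n + 1), c k • (ξ₀ ᵥ* A ^ k)) ⬝ᵥ x j := (sum_dot _ _ _).symm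
      _ = 0 := by rw [hzero, zero_dotProduct]
  have hw : ∀ j, j ≤ N - ℓ - n →
      ∑ i ∈ Finset.range (ℓ + n),
        (∑ k ∈ Finset.range (n + 1), c k • φ k i) ⬝ᵥ u (i + j) = 0 := by
    intro j hj
    have h0 : ∑ k ∈ Finset.range (n + 1),
        c k * ((ξ₀ ᵥ* A ^ k) ⬝ᵥ x j + ∑ i ∈ Finset.range (ℓ + n), φ k i ⬝ᵥ u (i + j)) = 0 :=
      Finset.sum_eq_zero fun k hk => by
        rw [hS k (Nat.lt_succ_iff.mp (Finset.mem_range.mp hk)) j hj, mul_zero]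
    simp only [mul_add] at h0
    rw [Finset.sum_add_distrib, hpart1, zero_add] at h0
    have hms : ∀ k, c k * ∑ i ∈ Finset.range (ℓ + n), φ k i ⬝ᵥ u (i + j)
        = ∑ i ∈ Finset.range (ℓ + n), c k * (φ k i ⬝ᵥ u (i + j)) := fun k =>
      Finset.mul_sum _ _ _
    simp only [hms] at h0
    rw [Finset.sum_comm] at h0
    rw [← h0]
    apply Finset.sum_congr rfl
    intro i _
    rw [sum_dot]
    apply Finset.sum_congr rfl
    intro k _
    rw [smul_dotProduct, smul_eq_mul]
  -- the combined vector lies in the left kernel of the deep Hankel matrix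
  have hW : ∀ i, i < ℓ + n → ∑ k ∈ Finset.range (n + 1), c k • φ k i = 0 := by
    have hker := rank_aux1 (hankel (ℓ + n) (N - (ℓ + n) + 1) u) (by simp [hPE])
    have hvm : (hankel (ℓ + n) (N - (ℓ + n) + 1) u).vecMul
        (fun p => ∑ k ∈ Finset.range (n + 1), c k * φ k (p.1 : ℕ) p.2) = 0 := by
      funext jf
      have hj : (jf : ℕ) ≤ N - ℓ - n := by have := jf.isLt; omega
      have h3 := hw jf hj
      rw [← Fin.sum_univ_eq_sum_range
        (fun a => (∑ k ∈ Finset.range (n + 1), c k • φ k a) ⬝ᵥ u (a + jf)) (ℓ + n)] at h3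
      simp only [Matrix.vecMul, dotProduct, Fintype.sum_prod_type, hankel,
        Matrix.of_apply, Pi.zero_apply, Finset.sum_apply, Pi.smul_apply, smul_eq_mul] at h3 ⊢
      exact h3
    have hzero := hker _ hvm
    intro i hi
    funext b
    have h2 := congrFun hzero (⟨i, hi⟩, b)
    simpa [Finset.sum_apply] using h2
  -- the input part of the kernel vector vanishes
  have hφhigh : ∀ k a, k ≤ n → φ k (n + a) = ξ₁ (n + a - k) := by
    intro k a hk
    simp only [hφdef]
    rw [if_neg (by omega : ¬(n + a < k)), if_pos (by omega : k ≤ n + a), zero_add]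
  have hξ₁zero : ∀ m a, ℓ ≤ a + m → ξ₁ a = 0 := by
    intro m
    induction m with
    | zero => intro a ha; exact hξ₁big a (by omega)
    | succ m ih =>
      intro a ha
      by_cases hcase : ℓ ≤ a + m
      · exact ih a hcase
      · have h0 := hW (n + a) (by omega)
        rw [Finset.sum_congr rfl (fun k hk => by
          rw [hφhigh k a (Nat.lt_succ_iff.mp (Finset.mem_range.mp hk))])] at h0
        rw [Finset.sum_range_succ] at h0
        have htail : ∑ k ∈ Finset.range n, c k • ξ₁ (n + a - k) = 0 := by
          apply Finset.sum_eq_zero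
          intro k hk
          have hkn : k < n := Finset.mem_range.mp hk
          rw [ih (n + a - k) (by omega), smul_zero]
        rw [htail, zero_add, show n + a - n = a by omega, hcn, one_smul] at h0
        exact h0
  have hξ₁ : ∀ a, ξ₁ a = 0 := fun a => hξ₁zero ℓ a (by omega)
  -- the state part annihilates the controllability matrix
  have hφlow : ∀ k i, φ k i = if i < k then ξ₀ ᵥ* (A ^ (k - 1 - i) * B) else 0 := by
    intro k i
    simp only [hφdef]
    have h2 : (if k ≤ i then ξ₁ (i - k) else 0) = 0 := by split <;> simp [hξ₁]
    rw [h2, add_zero]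
  have hAB : ∀ j', j' < n → ξ₀ ᵥ* (A ^ j' * B) = 0 := by
    intro j'
    induction j' using Nat.strong_induction_on with
    | _ j' ih =>
      intro hj'
      have h0 := hW (n - 1 - j') (by omega)
      rw [Finset.sum_congr rfl (fun k _ => by rw [hφlow k (n - 1 - j')])] at h0
      have hsplit : ∑ k ∈ Finset.range (n + 1),
          c k • (if n - 1 - j' < k then ξ₀ ᵥ* (A ^ (k - 1 - (n - 1 - j')) * B) else 0)
          = ∑ k ∈ Finset.range (n + 1),
            (if n - 1 - j' < k then c k • (ξ₀ ᵥ* (A ^ (k - 1 - (n - 1 - j')) * B)) else 0) := by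
        apply Finset.sum_congr rfl
        intro k _
        split <;> simp
      rw [hsplit, ← Finset.sum_filter] at h0
      have hfil : (Finset.range (n + 1)).filter (fun k => n - 1 - j' < k)
          = Finset.Ico (n - 1 - j' + 1) (n + 1) := by
        ext k; simp; omega
      rw [hfil, Finset.sum_Ico_eq_sum_range,
        show n + 1 - (n - 1 - j' + 1) = j' + 1 by omega] at h0
      rw [Finset.sum_congr rfl (fun d _ => by
        rw [show n - 1 - j' + 1 + d - 1 - (n - 1 - j') = d by omega])] at h0
      rw [Finset.sum_range_succ] at h0
      have htail : ∑ d ∈ Finset.range j', c (n - 1 - j' + 1 + d) • (ξ₀ ᵥ* (A ^ d * B)) = 0 := by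
        apply Finset.sum_eq_zero
        intro d hd
        have hdj : d < j' := Finset.mem_range.mp hd
        rw [ih d hdj (by omega), smul_zero]
      rw [htail, zero_add, show n - 1 - j' + 1 + j' = n by omega, hcn, one_smul] at h0
      exact h0
  have hξ₀vm : (ctrbMat A B).vecMul ξ₀ = 0 := by
    funext p
    have h0 := congrFun (hAB (p.1 : ℕ) p.1.isLt) p.2
    simp only [Matrix.vecMul, dotProduct, Pi.zero_apply] at h0 ⊢
    simpa [ctrbMat] using h0
  have hξ₀0 : ξ₀ = 0 := rank_aux1 (ctrbMat A B) (by rw [hctrb, Fintype.card_fin]) ξ₀ hξ₀vm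
  -- conclude
  funext s
  cases s with
  | inl i => exact congrFun hξ₀0 i
  | inr p =>
    obtain ⟨a, b⟩ := p
    have h1 := congrFun (hξ₁ (a : ℕ)) b
    simp only [hξ₁def] at h1
    rw [dif_pos a.isLt] at h1
    simpa using h1
end

section
/- Fix n, n_u, n_y ∈ ℕ, matrices A ∈ ℝ^{n×n}, B ∈ ℝ^{n×n_u}, C ∈ ℝ^{n_y×n}, D ∈ ℝ^{n_y×n_u}, with (A,B) controllable. Let (u^d, y^d) be a trajectory of length N of the LTI system (A,B,C,D), let 1 ≤ ℓ ≤ N, and assume u^d is persistently exciting of order ℓ + n. Then a pair of sequences (u, y) of length ℓ is a trajectory of the LTI system (A,B,C,D) if and only if there exists α ∈ ℝ^{N−ℓ+1} such that H_ℓ(u^d) α = u and H_ℓ(y^d) α = y (with u and y viewed as stacked vectors in ℝ^{ℓ n_u} and ℝ^{ℓ n_y}). -/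
/-!
Linear combinations of time-shifted pieces of the data trajectory are again trajectories, with
inputs `H_ℓ(u^d) α` and initial state `X α`, where `X = H_1(x^d)` collects the data states. Since
a trajectory is determined by its inputs and initial state, it suffices that `[H_ℓ(u^d); X]` has
full row rank.

A left-kernel vector `(η, ξ)` is a functional on inputs and initial state. Writing the initial
state through past inputs turns it into weights `w : ℤ → ℝ^{n_u}` on a bi-infinite input
sequence: `w p = η p` for `p ≥ 0` and `w (-1-k) = ξᵀ Aᵏ B`. Shifting the data by `s ≤ n` steps
shifts `w` by `s`; combining these shifts with the coefficients of the characteristic polynomial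
of `A` cancels the state by Cayley–Hamilton and leaves a vector in the left kernel of
`H_{ℓ+n}(u^d)`, which vanishes by persistent excitation. So `w` satisfies a monic linear
recurrence and vanishes far to the right, hence `w = 0`: `η = 0` and `ξᵀ Aᵏ B = 0` for all `k`,
so `ξ = 0` by controllability.
-/

open Matrix

open Finset

namespace Matrix

variable {m k R : Type*} [Fintype m]

section Field

variable [Fintype k] [Field R] {M : Matrix m k R}

theorem vecMul_injective_of_rank_eq_card (h : M.rank = Fintype.card m) :
    Function.Injective M.vecMul := by
  rw [vecMul_injective_iff, linearIndependent_iff_card_eq_finrank_span, Set.finrank,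
    ← rank_eq_finrank_span_row, h]

theorem mulVec_surjective_of_vecMul_injective (h : Function.Injective M.vecMul) :
    Function.Surjective M.mulVec := by
  have hrange : LinearMap.range M.mulVecLin = ⊤ := Submodule.eq_top_of_finrank_eq <| by
    rw [← Matrix.rank, (vecMul_injective_iff.mp h).rank_matrix, Module.finrank_fintype_fun_eq_card]
  exact LinearMap.range_eq_top.mp hrange

end Field

theorem sum_charpoly_coeff_smul_vecMul_pow [CommRing R] [Nontrivial R] [DecidableEq m]
    (A : Matrix m m R) (v : m → R) :
    ∑ s ∈ range (Fintype.card m + 1), A.charpoly.coeff s • (v ᵥ* A ^ s) = 0 := by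
  have h := congrArg (v ᵥ* ·) A.aeval_self_charpoly
  simpa only [Polynomial.aeval_eq_sum_range, charpoly_natDegree_eq_dim, vecMul_sum, vecMul_smul,
    vecMul_zero] using h

end Matrix

theorem eq_zero_of_linearRecurrence {R M : Type*} [Ring R] [AddCommGroup M] [Module R M]
    {a : ℕ → R} {d : ℕ} (had : a d = 1) {g : ℤ → M}
    (hrec : ∀ p : ℤ, ∑ s ∈ range (d + 1), a s • g (p - s) = 0) (q₀ : ℤ)
    (hg : ∀ q, q₀ ≤ q → g q = 0) : g = 0 := by
  suffices h : ∀ k : ℕ, ∀ q, q₀ - k ≤ q → g q = 0 by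
    funext q
    exact h (q₀ - q).toNat q (by omega)
  intro k
  induction k with
  | zero => simpa using hg
  | succ k ih =>
    intro q hq
    rcases eq_or_lt_of_le hq with rfl | hlt
    · have h := hrec (q₀ - (k + 1 : ℕ) + d)
      rw [sum_range_succ, sum_eq_zero fun s hs => by
        rw [ih _ (by simp at hs; omega), smul_zero], had, one_smul, zero_add] at h
      simpa using h
    · exact ih q (by omega)

def shiftComb {V : Type*} [AddCommMonoid V] [Module ℝ V] {m : ℕ} (α : Fin m → ℝ) (z : ℕ → V)
    (t : ℕ) : V :=
  ∑ j, α j • z (t + j)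

section Hankel

variable {nz ℓ m : ℕ} (z : ℕ → Fin nz → ℝ)

theorem hankel_mulVec_apply (α : Fin m → ℝ) (p : Fin ℓ × Fin nz) :
    (hankel ℓ m z *ᵥ α) p = shiftComb α z p.1 p.2 := by
  simp [hankel, shiftComb, mulVec, dotProduct, Finset.sum_apply, mul_comm]

theorem hankel_mulVec_eq_iff (α : Fin m → ℝ) (w : ℕ → Fin nz → ℝ) :
    hankel ℓ m z *ᵥ α = (fun p => w p.1 p.2) ↔ ∀ t < ℓ, shiftComb α z t = w t := by
  simp only [funext_iff, hankel_mulVec_apply, Prod.forall, Fin.forall_iff]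

theorem vecMul_hankel_apply (β : Fin ℓ × Fin nz → ℝ) (j : Fin m) :
    (β ᵥ* hankel ℓ m z) j = ∑ p : Fin ℓ, (fun q => β (p, q)) ⬝ᵥ z (p + j) := by
  simp [hankel, vecMul, dotProduct, Fintype.sum_prod_type]

end Hankel

def IsStateTrajectory {n nu ny : ℕ} (A : Matrix (Fin n) (Fin n) ℝ) (B : Matrix (Fin n) (Fin nu) ℝ)
    (C : Matrix (Fin ny) (Fin n) ℝ) (D : Matrix (Fin ny) (Fin nu) ℝ) (N : ℕ)
    (x : ℕ → Fin n → ℝ) (u : ℕ → Fin nu → ℝ) (y : ℕ → Fin ny → ℝ) : Prop :=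
  (∀ t, t + 1 < N → x (t + 1) = A *ᵥ x t + B *ᵥ u t) ∧ (∀ t, t < N → y t = C *ᵥ x t + D *ᵥ u t)

namespace IsStateTrajectory

variable {n nu ny : ℕ} {A : Matrix (Fin n) (Fin n) ℝ} {B : Matrix (Fin n) (Fin nu) ℝ}
  {C : Matrix (Fin ny) (Fin n) ℝ} {D : Matrix (Fin ny) (Fin nu) ℝ} {N : ℕ}
  {x : ℕ → Fin n → ℝ} {u : ℕ → Fin nu → ℝ} {y : ℕ → Fin ny → ℝ}

theorem congr (h : IsStateTrajectory A B C D N x u y) {u' : ℕ → Fin nu → ℝ}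
    {y' : ℕ → Fin ny → ℝ} (hu : ∀ t < N, u t = u' t) (hy : ∀ t < N, y t = y' t) :
    IsStateTrajectory A B C D N x u' y' :=
  ⟨fun t ht => hu t (by omega) ▸ h.1 t ht, fun t ht => hu t ht ▸ hy t ht ▸ h.2 t ht⟩

theorem output_eq (h : IsStateTrajectory A B C D N x u y) {x' : ℕ → Fin n → ℝ}
    {y' : ℕ → Fin ny → ℝ} (h' : IsStateTrajectory A B C D N x' u y') (h0 : x 0 = x' 0) {t : ℕ}
    (ht : t < N) : y t = y' t := by
  have hx : ∀ t < N, x t = x' t := by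
    intro t ht
    induction t with
    | zero => exact h0
    | succ t ih => rw [h.1 t ht, h'.1 t ht, ih (by omega)]
  rw [h.2 t ht, h'.2 t ht, hx t ht]

theorem shiftComb (h : IsStateTrajectory A B C D N x u y) {ℓ m : ℕ} (hm : ℓ + m ≤ N + 1)
    (α : Fin m → ℝ) :
    IsStateTrajectory A B C D ℓ (shiftComb α x) (shiftComb α u) (shiftComb α y) := by
  constructor <;> intro t ht <;>
    simp only [_root_.shiftComb, mulVec_sum, mulVec_smul, ← sum_add_distrib, ← smul_add] <;>
    refine sum_congr rfl fun j _ => ?_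
  · rw [← h.1 _ (by omega), add_right_comm]
  · rw [← h.2 _ (by omega)]

end IsStateTrajectory

section LeftKernel

variable {n nu : ℕ} (A : Matrix (Fin n) (Fin n) ℝ) (B : Matrix (Fin n) (Fin nu) ℝ)
  (ξ : Fin n → ℝ) (η : ℕ → Fin nu → ℝ)

def inputWeights : ℤ → Fin nu → ℝ
  | Int.ofNat p => η p
  | Int.negSucc k => ξ ᵥ* (A ^ k * B)

@[simp]
theorem inputWeights_natCast (p : ℕ) : inputWeights A B ξ η p = η p := rfl

@[simp]
theorem inputWeights_negSucc (k : ℕ) : inputWeights A B ξ η (Int.negSucc k) = ξ ᵥ* (A ^ k * B) :=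
  rfl

variable {A B ξ η} {N ℓ : ℕ} {ud : ℕ → Fin nu → ℝ} {xd : ℕ → Fin n → ℝ}

theorem inputWeights_pairing_succ (hx : ∀ t, t + 1 < N → xd (t + 1) = A *ᵥ xd t + B *ᵥ ud t)
    (hη : ∀ p, ℓ ≤ p → η p = 0) {K s j : ℕ} (hK : ℓ + s < K) (hj : j + 1 < N) :
    (ξ ᵥ* A ^ (s + 1)) ⬝ᵥ xd j +
        ∑ p ∈ range K, inputWeights A B ξ η (p - (s + 1 : ℕ)) ⬝ᵥ ud (p + j) =
      (ξ ᵥ* A ^ s) ⬝ᵥ xd (j + 1) +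
        ∑ p ∈ range K, inputWeights A B ξ η (p - s) ⬝ᵥ ud (p + (j + 1)) := by
  obtain ⟨K, rfl⟩ : ∃ K', K = K' + 1 := ⟨K - 1, by omega⟩
  have hfirst : inputWeights A B ξ η ((0 : ℕ) - (s + 1 : ℕ)) = ξ ᵥ* (A ^ s * B) := by
    rw [show ((0 : ℕ) : ℤ) - (s + 1 : ℕ) = Int.negSucc s by omega, inputWeights_negSucc]
  have hlast : inputWeights A B ξ η (K - s) = 0 := by
    rw [show (K : ℤ) - s = (K - s : ℕ) by omega, inputWeights_natCast, hη _ (by omega)]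
  have hmid : ∀ p ∈ range K,
      inputWeights A B ξ η ((p + 1 : ℕ) - (s + 1 : ℕ)) ⬝ᵥ ud (p + 1 + j) =
        inputWeights A B ξ η (p - s) ⬝ᵥ ud (p + (j + 1)) := fun p _ => by
    rw [show ((p + 1 : ℕ) : ℤ) - (s + 1 : ℕ) = p - s by omega, add_right_comm, add_assoc]
  rw [sum_range_succ', sum_range_succ, sum_congr rfl hmid, hfirst, hlast, zero_dotProduct,
    hx j hj, dotProduct_add, dotProduct_mulVec, dotProduct_mulVec, vecMul_vecMul, vecMul_vecMul,
    ← pow_succ, zero_add]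
  abel

theorem inputWeights_pairing_eq (hx : ∀ t, t + 1 < N → xd (t + 1) = A *ᵥ xd t + B *ᵥ ud t)
    (hη : ∀ p, ℓ ≤ p → η p = 0) {K : ℕ} :
    ∀ {s j : ℕ}, ℓ + s ≤ K → j + s < N →
      (ξ ᵥ* A ^ s) ⬝ᵥ xd j + ∑ p ∈ range K, inputWeights A B ξ η (p - s) ⬝ᵥ ud (p + j) =
        ξ ⬝ᵥ xd (j + s) + ∑ p ∈ range ℓ, η p ⬝ᵥ ud (p + (j + s))
  | 0, j, hK, _ => by
    simp only [pow_zero, vecMul_one, Nat.cast_zero, sub_zero, inputWeights_natCast, add_zero]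
    congr 1
    refine (sum_subset (range_subset_range.2 (by omega)) fun p _ hp => ?_).symm
    rw [hη p (by simpa using hp), zero_dotProduct]
  | s + 1, j, hK, hjs => by
    rw [inputWeights_pairing_succ hx hη (by omega) (by omega),
      inputWeights_pairing_eq hx hη (by omega) (by omega), add_right_comm j 1 s, add_assoc j s 1]

theorem inputWeights_eq_zero (hx : ∀ t, t + 1 < N → xd (t + 1) = A *ᵥ xd t + B *ᵥ ud t)
    (hℓ : 1 ≤ ℓ) (hN : ℓ + n ≤ N)
    (hPE : (hankel (ℓ + n) (N - (ℓ + n) + 1) ud).rank = (ℓ + n) * nu)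
    (hη : ∀ p, ℓ ≤ p → η p = 0)
    (h : ∀ j ≤ N - ℓ, ξ ⬝ᵥ xd j + ∑ p ∈ range ℓ, η p ⬝ᵥ ud (p + j) = 0) :
    inputWeights A B ξ η = 0 := by
  set a : ℕ → ℝ := fun s => A.charpoly.coeff s
  have hCH : ∑ s ∈ range (n + 1), a s • (ξ ᵥ* A ^ s) = 0 := by
    simpa using A.sum_charpoly_coeff_smul_vecMul_pow ξ
  have hmonic : a n = 1 := by
    simpa [a] using A.charpoly_monic.coeff_natDegree
  set b : ℕ → Fin nu → ℝ := fun p => ∑ s ∈ range (n + 1), a s • inputWeights A B ξ η (p - s)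
  have hcol : ∀ j ≤ N - (ℓ + n), ∑ p ∈ range (ℓ + n), b p ⬝ᵥ ud (p + j) = 0 := by
    intro j hj
    have hpair : ∀ s ∈ range (n + 1), (ξ ᵥ* A ^ s) ⬝ᵥ xd j +
        ∑ p ∈ range (ℓ + n), inputWeights A B ξ η (p - s) ⬝ᵥ ud (p + j) = 0 := fun s hs => by
      rw [mem_range] at hs
      rw [inputWeights_pairing_eq hx hη (by omega) (by omega), h _ (by omega)]
    calc ∑ p ∈ range (ℓ + n), b p ⬝ᵥ ud (p + j)
        = (∑ s ∈ range (n + 1), a s • (ξ ᵥ* A ^ s)) ⬝ᵥ xd j +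
            ∑ p ∈ range (ℓ + n), b p ⬝ᵥ ud (p + j) := by rw [hCH, zero_dotProduct, zero_add]
      _ = ∑ s ∈ range (n + 1), a s * ((ξ ᵥ* A ^ s) ⬝ᵥ xd j +
            ∑ p ∈ range (ℓ + n), inputWeights A B ξ η (p - s) ⬝ᵥ ud (p + j)) := by
        simp only [b, sum_dotProduct, smul_dotProduct, smul_eq_mul, mul_add, sum_add_distrib,
          mul_sum]
        rw [sum_comm (s := range (ℓ + n))]
      _ = 0 := sum_eq_zero fun s hs => by rw [hpair s hs, mul_zero]
  have hb : ∀ p < ℓ + n, b p = 0 := by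
    have hinj := vecMul_injective_of_rank_eq_card (M := hankel (ℓ + n) (N - (ℓ + n) + 1) ud)
      (by simpa using hPE)
    have hzero : (fun pq : Fin (ℓ + n) × Fin nu => b pq.1 pq.2) = 0 := hinj <| by
      ext j
      simp only [zero_vecMul, Pi.zero_apply]
      rw [vecMul_hankel_apply, Fin.sum_univ_eq_sum_range (fun p => b p ⬝ᵥ ud (p + j)),
        hcol j (by omega)]
    intro p hp
    ext q
    exact congrFun hzero (⟨p, hp⟩, q)
  refine eq_zero_of_linearRecurrence hmonic (fun p => ?_) ℓ fun q hq => ?_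
  · cases p with
    | ofNat p =>
      rw [Int.ofNat_eq_natCast]
      rcases lt_or_ge p (ℓ + n) with hp | hp
      · exact hb p hp
      · refine sum_eq_zero fun s hs => ?_
        rw [mem_range] at hs
        rw [show (p : ℤ) - s = (p - s : ℕ) by omega, inputWeights_natCast,
          hη _ (by omega), smul_zero]
    | negSucc k =>
      calc ∑ s ∈ range (n + 1), a s • inputWeights A B ξ η (Int.negSucc k - s)
          = (∑ s ∈ range (n + 1), a s • (ξ ᵥ* A ^ s)) ᵥ* (A ^ k * B) := by
            simp only [sum_vecMul, smul_vecMul, vecMul_vecMul]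
            refine sum_congr rfl fun s _ => ?_
            rw [show Int.negSucc k - s = Int.negSucc (s + k) by omega, inputWeights_negSucc,
              pow_add, Matrix.mul_assoc]
        _ = 0 := by rw [hCH, zero_vecMul]
  · rw [show q = (q.toNat : ℕ) by omega, inputWeights_natCast, hη _ (by omega)]

end LeftKernel

theorem eq_zero_of_inputWeights_eq_zero {n nu : ℕ} {A : Matrix (Fin n) (Fin n) ℝ}
    {B : Matrix (Fin n) (Fin nu) ℝ} (hctrb : (ctrbMat A B).rank = n) {ξ : Fin n → ℝ}
    {η : ℕ → Fin nu → ℝ} (h : inputWeights A B ξ η = 0) : ξ = 0 := by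
  refine vecMul_injective_of_rank_eq_card (M := ctrbMat A B) (by simpa using hctrb) ?_
  ext ⟨k, q⟩
  have hk := congrFun (congrFun h (Int.negSucc k)) q
  simpa [ctrbMat, vecMul, dotProduct] using hk

section Data

variable {n nu : ℕ} {A : Matrix (Fin n) (Fin n) ℝ} {B : Matrix (Fin n) (Fin nu) ℝ}
  {N ℓ : ℕ} {ud : ℕ → Fin nu → ℝ} {xd : ℕ → Fin n → ℝ}

theorem vecMul_fromRows_hankel_injective (hctrb : (ctrbMat A B).rank = n)
    (hx : ∀ t, t + 1 < N → xd (t + 1) = A *ᵥ xd t + B *ᵥ ud t) (hℓ : 1 ≤ ℓ) (hN : ℓ + n ≤ N)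
    (hPE : (hankel (ℓ + n) (N - (ℓ + n) + 1) ud).rank = (ℓ + n) * nu) :
    Function.Injective (fromRows (hankel ℓ (N - ℓ + 1) ud) (hankel 1 (N - ℓ + 1) xd)).vecMul := by
  rw [← coe_vecMulLinear, injective_iff_map_eq_zero]
  intro v hv
  set η : ℕ → Fin nu → ℝ := fun p q => if hp : p < ℓ then v (Sum.inl (⟨p, hp⟩, q)) else 0
  set ξ : Fin n → ℝ := fun i => v (Sum.inr (0, i))
  have hη : ∀ p, ℓ ≤ p → η p = 0 := fun p hp => by ext q; simp [η, hp.not_gt]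
  have hcol : ∀ j ≤ N - ℓ, ξ ⬝ᵥ xd j + ∑ p ∈ range ℓ, η p ⬝ᵥ ud (p + j) = 0 := by
    intro j hj
    have hj' := congrFun hv ⟨j, by omega⟩
    rw [vecMulLinear_apply, vecMul_fromRows, Pi.add_apply, vecMul_hankel_apply,
      vecMul_hankel_apply] at hj'
    rw [← Fin.sum_univ_eq_sum_range (fun p => η p ⬝ᵥ ud (p + j))]
    simpa [η, ξ, add_comm] using hj'
  have hw := inputWeights_eq_zero hx hℓ hN hPE hη hcol
  have hξ := eq_zero_of_inputWeights_eq_zero hctrb hw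
  ext (⟨p, q⟩ | ⟨i, k⟩)
  · simpa [η] using congrFun (congrFun hw p) q
  · simpa [ξ, Fin.fin_one_eq_zero i] using congrFun hξ k

theorem exists_shiftComb_eq (hctrb : (ctrbMat A B).rank = n)
    (hx : ∀ t, t + 1 < N → xd (t + 1) = A *ᵥ xd t + B *ᵥ ud t) (hℓ : 1 ≤ ℓ) (hN : ℓ + n ≤ N)
    (hPE : (hankel (ℓ + n) (N - (ℓ + n) + 1) ud).rank = (ℓ + n) * nu)
    (u : ℕ → Fin nu → ℝ) (x₀ : Fin n → ℝ) :
    ∃ α : Fin (N - ℓ + 1) → ℝ,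
      (∀ t < ℓ, shiftComb α ud t = u t) ∧ shiftComb α xd 0 = x₀ := by
  obtain ⟨α, hα⟩ := mulVec_surjective_of_vecMul_injective
    (vecMul_fromRows_hankel_injective hctrb hx hℓ hN hPE)
    (Sum.elim (fun p => u p.1 p.2) (fun p => x₀ p.2))
  rw [fromRows_mulVec, Sum.elim_eq_iff, hankel_mulVec_eq_iff] at hα
  exact ⟨α, hα.1, (hankel_mulVec_eq_iff xd α fun _ => x₀).1 hα.2 0 one_pos⟩

theorem add_le_of_rank_hankel (hctrb : (ctrbMat A B).rank = n) (hℓ : 1 ≤ ℓ) (hℓN : ℓ ≤ N)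
    (hPE : (hankel (ℓ + n) (N - (ℓ + n) + 1) ud).rank = (ℓ + n) * nu) : ℓ + n ≤ N := by
  rcases Nat.eq_zero_or_pos nu with rfl | hnu
  · have h := hctrb ▸ (ctrbMat A B).rank_le_card_width
    simp only [Fintype.card_prod, Fintype.card_fin, mul_zero, nonpos_iff_eq_zero] at h
    omega
  · have h := hPE ▸ (hankel (ℓ + n) (N - (ℓ + n) + 1) ud).rank_le_card_width
    have := Nat.le_mul_of_pos_right (ℓ + n) hnu
    simp only [Fintype.card_fin] at h
    omega

end Data

/-- Fundamental Lemma (data-driven characterization): if `(A, B)` is controllable,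
`(u^d, y^d)` is a trajectory of length `N` and `u^d` is persistently exciting of order
`ℓ + n`, then `(u, y)` is a trajectory of length `ℓ` iff there exists `α ∈ ℝ^{N-ℓ+1}` with
`H_ℓ(u^d) α = u` and `H_ℓ(y^d) α = y` (as stacked vectors). -/
theorem fundamental_lemma {n nu ny : ℕ}
    (A : Matrix (Fin n) (Fin n) ℝ) (B : Matrix (Fin n) (Fin nu) ℝ)
    (C : Matrix (Fin ny) (Fin n) ℝ) (D : Matrix (Fin ny) (Fin nu) ℝ)
    (hctrb : (ctrbMat A B).rank = n)
    (N : ℕ) (ud : ℕ → Fin nu → ℝ) (yd : ℕ → Fin ny → ℝ)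
    (hdata : IsTrajectory A B C D N ud yd)
    (ℓ : ℕ) (hℓ : 1 ≤ ℓ) (hℓN : ℓ ≤ N)
    (hPE : (hankel (ℓ + n) (N - (ℓ + n) + 1) ud).rank = (ℓ + n) * nu)
    (u : ℕ → Fin nu → ℝ) (y : ℕ → Fin ny → ℝ) :
    IsTrajectory A B C D ℓ u y ↔
      ∃ α : Fin (N - ℓ + 1) → ℝ,
        (hankel ℓ (N - ℓ + 1) ud).mulVec α = (fun p => u (p.1 : ℕ) p.2) ∧
        (hankel ℓ (N - ℓ + 1) yd).mulVec α = (fun p => y (p.1 : ℕ) p.2) := by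
  obtain ⟨xd, hd⟩ : ∃ xd, IsStateTrajectory A B C D N xd ud yd := hdata
  have hN := add_le_of_rank_hankel hctrb hℓ hℓN hPE
  simp only [hankel_mulVec_eq_iff]
  constructor
  · rintro ⟨x, hx : IsStateTrajectory A B C D ℓ x u y⟩
    obtain ⟨α, hu, hx₀⟩ := exists_shiftComb_eq hctrb hd.1 hℓ hN hPE u (x 0)
    have hα := (hd.shiftComb (by omega) α).congr hu fun _ _ => rfl
    exact ⟨α, hu, fun t ht => (hx.output_eq hα hx₀.symm ht).symm⟩
  · rintro ⟨α, hu, hy⟩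
    exact ⟨shiftComb α xd, (hd.shiftComb (by omega) α).congr hu hy⟩
end

section
/- Fix n, n_u, n_y ∈ ℕ, matrices A ∈ ℝ^{n×n}, B ∈ ℝ^{n×n_u}, C ∈ ℝ^{n_y×n}, D ∈ ℝ^{n_y×n_u}, and ℓ ≥ 1. The set of all trajectories of length ℓ of the LTI system (A,B,C,D), viewed as stacked vectors (u; y) ∈ ℝ^{ℓ n_u} × ℝ^{ℓ n_y}, is a linear subspace of dimension ℓ n_u + rank(O_ℓ), where O_ℓ is the observability matrix of depth ℓ. -/
open Matrix

/-- The set of trajectories of length `ℓ` of the LTI system `(A, B, C, D)`, viewed as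
stacked input-output vectors `(u; y) ∈ ℝ^{ℓ n_u} × ℝ^{ℓ n_y}`. -/
def trajectorySet {n nu ny : ℕ} (A : Matrix (Fin n) (Fin n) ℝ) (B : Matrix (Fin n) (Fin nu) ℝ)
    (C : Matrix (Fin ny) (Fin n) ℝ) (D : Matrix (Fin ny) (Fin nu) ℝ) (ℓ : ℕ) :
    Set ((Fin ℓ × Fin nu → ℝ) × (Fin ℓ × Fin ny → ℝ)) :=
  {w | ∃ x : Fin ℓ → Fin n → ℝ,
    (∀ t : Fin ℓ, ∀ h : (t : ℕ) + 1 < ℓ,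
      x ⟨(t : ℕ) + 1, h⟩ = A.mulVec (x t) + B.mulVec (fun k => w.1 (t, k))) ∧
    (∀ t : Fin ℓ, (fun k => w.2 (t, k)) = C.mulVec (x t) + D.mulVec (fun k => w.1 (t, k)))}

namespace TrajAux

variable {n nu ny : ℕ}

/-- extend the input by zero -/
def uext (ℓ : ℕ) (u : Fin ℓ × Fin nu → ℝ) (t : ℕ) : Fin nu → ℝ :=
  fun k => if h : t < ℓ then u (⟨t, h⟩, k) else 0

lemma uext_add (ℓ : ℕ) (u u' : Fin ℓ × Fin nu → ℝ) (t : ℕ) :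
    uext ℓ (u + u') t = uext ℓ u t + uext ℓ u' t := by
  funext k; by_cases h : t < ℓ <;> simp [uext, h]

lemma uext_smul (ℓ : ℕ) (c : ℝ) (u : Fin ℓ × Fin nu → ℝ) (t : ℕ) :
    uext ℓ (c • u) t = c • uext ℓ u t := by
  funext k; by_cases h : t < ℓ <;> simp [uext, h]

lemma uext_zero (ℓ : ℕ) (t : ℕ) : uext (nu := nu) ℓ 0 t = 0 := by
  funext k; by_cases h : t < ℓ <;> simp [uext, h]

lemma uext_lt (ℓ : ℕ) (u : Fin ℓ × Fin nu → ℝ) (t : Fin ℓ) :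
    uext ℓ u (t : ℕ) = fun k => u (t, k) := by
  funext k
  show (if h : (t : ℕ) < ℓ then u (⟨t, h⟩, k) else 0) = u (t, k)
  rw [dif_pos t.isLt]

/-- the state sequence -/
def st (A : Matrix (Fin n) (Fin n) ℝ) (B : Matrix (Fin n) (Fin nu) ℝ) (ℓ : ℕ)
    (u : Fin ℓ × Fin nu → ℝ) (x0 : Fin n → ℝ) : ℕ → Fin n → ℝ
  | 0 => x0
  | t + 1 => A.mulVec (st A B ℓ u x0 t) + B.mulVec (uext ℓ u t)

lemma st_add (A : Matrix (Fin n) (Fin n) ℝ) (B : Matrix (Fin n) (Fin nu) ℝ) (ℓ : ℕ)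
    (u u' : Fin ℓ × Fin nu → ℝ) (x0 x0' : Fin n → ℝ) (t : ℕ) :
    st A B ℓ (u + u') (x0 + x0') t = st A B ℓ u x0 t + st A B ℓ u' x0' t := by
  induction t with
  | zero => rfl
  | succ t ih =>
    simp only [st, ih, uext_add, mulVec_add]
    abel

lemma st_smul (A : Matrix (Fin n) (Fin n) ℝ) (B : Matrix (Fin n) (Fin nu) ℝ) (ℓ : ℕ)
    (c : ℝ) (u : Fin ℓ × Fin nu → ℝ) (x0 : Fin n → ℝ) (t : ℕ) :
    st A B ℓ (c • u) (c • x0) t = c • st A B ℓ u x0 t := by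
  induction t with
  | zero => rfl
  | succ t ih =>
    simp only [st, ih, uext_smul, mulVec_smul, smul_add]

lemma st_zero_input (A : Matrix (Fin n) (Fin n) ℝ) (B : Matrix (Fin n) (Fin nu) ℝ) (ℓ : ℕ)
    (x0 : Fin n → ℝ) (t : ℕ) :
    st A B ℓ 0 x0 t = (A ^ t).mulVec x0 := by
  induction t with
  | zero => simp [st]
  | succ t ih =>
    simp [st, ih, uext_zero, mulVec_mulVec, ← pow_succ']

lemma obsMat_mulVec (A : Matrix (Fin n) (Fin n) ℝ) (C : Matrix (Fin ny) (Fin n) ℝ)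
    (ℓ : ℕ) (x0 : Fin n → ℝ) (q : Fin ℓ × Fin ny) :
    (obsMat A C ℓ).mulVec x0 q = C.mulVec ((A ^ (q.1 : ℕ)).mulVec x0) q.2 := by
  rw [mulVec_mulVec]
  rfl

/-- the trajectory map -/
def Fmap (A : Matrix (Fin n) (Fin n) ℝ) (B : Matrix (Fin n) (Fin nu) ℝ)
    (C : Matrix (Fin ny) (Fin n) ℝ) (D : Matrix (Fin ny) (Fin nu) ℝ) (ℓ : ℕ) :
    ((Fin ℓ × Fin nu → ℝ) × (Fin n → ℝ)) →ₗ[ℝ]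
      ((Fin ℓ × Fin nu → ℝ) × (Fin ℓ × Fin ny → ℝ)) where
  toFun p := (p.1, fun q =>
    (C.mulVec (st A B ℓ p.1 p.2 (q.1 : ℕ)) + D.mulVec (fun k => p.1 (q.1, k))) q.2)
  map_add' p p' := by
    refine Prod.ext rfl ?_
    funext q
    show (C.mulVec (st A B ℓ (p + p').1 (p + p').2 (q.1 : ℕ))
          + D.mulVec (fun k => (p + p').1 (q.1, k))) q.2
        = (C.mulVec (st A B ℓ p.1 p.2 (q.1 : ℕ)) + D.mulVec (fun k => p.1 (q.1, k))) q.2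
        + (C.mulVec (st A B ℓ p'.1 p'.2 (q.1 : ℕ)) + D.mulVec (fun k => p'.1 (q.1, k))) q.2
    have h1 : (p + p').1 = p.1 + p'.1 := rfl
    have h2 : (p + p').2 = p.2 + p'.2 := rfl
    rw [h1, h2, st_add]
    have h3 : (fun k => (p.1 + p'.1) (q.1, k))
        = (fun k => p.1 (q.1, k)) + (fun k => p'.1 (q.1, k)) := rfl
    rw [h3, mulVec_add, mulVec_add]
    simp only [Pi.add_apply]
    ring
  map_smul' c p := by
    refine Prod.ext rfl ?_
    funext q
    show (C.mulVec (st A B ℓ (c • p).1 (c • p).2 (q.1 : ℕ))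
          + D.mulVec (fun k => (c • p).1 (q.1, k))) q.2
        = c • (C.mulVec (st A B ℓ p.1 p.2 (q.1 : ℕ)) + D.mulVec (fun k => p.1 (q.1, k))) q.2
    have h1 : (c • p).1 = c • p.1 := rfl
    have h2 : (c • p).2 = c • p.2 := rfl
    rw [h1, h2, st_smul]
    have h3 : (fun k => (c • p.1) (q.1, k)) = c • (fun k => p.1 (q.1, k)) := rfl
    rw [h3, mulVec_smul, mulVec_smul]
    simp only [Pi.smul_apply, Pi.add_apply, smul_eq_mul]
    ring

end TrajAux

open TrajAux in
/-- The set of all trajectories of length `ℓ` of the LTI system `(A, B, C, D)` is a linear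
subspace of `ℝ^{ℓ n_u} × ℝ^{ℓ n_y}` of dimension `ℓ n_u + rank O_ℓ`. -/
theorem trajectorySet_is_subspace_finrank {n nu ny : ℕ}
    (A : Matrix (Fin n) (Fin n) ℝ) (B : Matrix (Fin n) (Fin nu) ℝ)
    (C : Matrix (Fin ny) (Fin n) ℝ) (D : Matrix (Fin ny) (Fin nu) ℝ)
    (ℓ : ℕ) (hℓ : 1 ≤ ℓ) :
    ∃ W : Submodule ℝ ((Fin ℓ × Fin nu → ℝ) × (Fin ℓ × Fin ny → ℝ)),
      (W : Set ((Fin ℓ × Fin nu → ℝ) × (Fin ℓ × Fin ny → ℝ))) = trajectorySet A B C D ℓ ∧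
      Module.finrank ℝ W = ℓ * nu + (obsMat A C ℓ).rank := by
  classical
  set F := Fmap A B C D ℓ with hF
  have Fapp : ∀ p : (Fin ℓ × Fin nu → ℝ) × (Fin n → ℝ), F p = (p.1, fun q =>
      (C.mulVec (st A B ℓ p.1 p.2 (q.1 : ℕ)) + D.mulVec (fun k => p.1 (q.1, k))) q.2) :=
    fun _ => rfl
  refine ⟨LinearMap.range F, ?_, ?_⟩
  · ext w
    simp only [SetLike.mem_coe, LinearMap.mem_range, trajectorySet, Set.mem_setOf_eq]
    constructor
    · rintro ⟨⟨u, x0⟩, rfl⟩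
      rw [Fapp]
      refine ⟨fun t => st A B ℓ u x0 (t : ℕ), ?_, ?_⟩
      · intro t h
        show st A B ℓ u x0 ((t : ℕ) + 1) = _
        simp only [st]
        rw [uext_lt]
      · intro t
        funext k
        rfl
    · rintro ⟨x, hrec, hout⟩
      refine ⟨(w.1, x ⟨0, hℓ⟩), ?_⟩
      have key : ∀ t : ℕ, ∀ h : t < ℓ, st A B ℓ w.1 (x ⟨0, hℓ⟩) t = x ⟨t, h⟩ := by
        intro t
        induction t with
        | zero => intro h; rfl
        | succ t ih =>
          intro h
          have ht : t < ℓ := Nat.lt_of_succ_lt h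
          have := hrec ⟨t, ht⟩ h
          simp only [st, ih ht]
          rw [this]
          exact congrArg (fun v => A.mulVec (x ⟨t, ht⟩) + B.mulVec v) (uext_lt ℓ w.1 ⟨t, ht⟩)
      rw [Fapp]
      refine Prod.ext rfl ?_
      funext q
      show (C.mulVec (st A B ℓ w.1 (x ⟨0, hℓ⟩) (q.1 : ℕ)) + D.mulVec (fun k => w.1 (q.1, k))) q.2
          = w.2 q
      rw [key (q.1 : ℕ) q.1.isLt]
      have h1 := congrFun (hout q.1) q.2
      have h2 : x ⟨(q.1 : ℕ), q.1.isLt⟩ = x q.1 := rfl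
      rw [h2]
      exact h1.symm
  · -- dimension count
    have hdom : Module.finrank ℝ ((Fin ℓ × Fin nu → ℝ) × (Fin n → ℝ)) = ℓ * nu + n := by
      simp [Module.finrank_prod]
    have hrn : Module.finrank ℝ (LinearMap.range F) + Module.finrank ℝ (LinearMap.ker F)
        = ℓ * nu + n := by
      rw [← hdom]; exact LinearMap.finrank_range_add_finrank_ker F
    set M := obsMat A C ℓ with hM
    have hzterm : ∀ q1 : Fin ℓ,
        (fun k => (0 : Fin ℓ × Fin nu → ℝ) (q1, k)) = (0 : Fin nu → ℝ) := fun _ => rfl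
    have mem_iff : ∀ p : (Fin ℓ × Fin nu → ℝ) × (Fin n → ℝ),
        p ∈ LinearMap.ker F ↔ p.1 = 0 ∧ M.mulVec p.2 = 0 := by
      rintro ⟨u, x0⟩
      rw [LinearMap.mem_ker, Fapp, Prod.mk_eq_zero]
      constructor
      · rintro ⟨rfl, h2⟩
        refine ⟨rfl, ?_⟩
        funext q
        have h3 := congrFun h2 q
        rw [hzterm q.1, mulVec_zero, st_zero_input] at h3
        simp only [Pi.add_apply, Pi.zero_apply, add_zero] at h3
        rw [Pi.zero_apply, obsMat_mulVec]
        exact h3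
      · rintro ⟨rfl, h2⟩
        refine ⟨rfl, ?_⟩
        funext q
        rw [Pi.zero_apply, hzterm q.1, mulVec_zero, st_zero_input]
        simp only [Pi.add_apply, Pi.zero_apply, add_zero]
        have h3 := congrFun h2 q
        rw [obsMat_mulVec] at h3
        exact h3
    have hker : LinearMap.ker F ≃ₗ[ℝ] LinearMap.ker M.mulVecLin := by
      refine LinearEquiv.ofBijective
        (LinearMap.codRestrict _ ((LinearMap.snd ℝ _ _).comp (LinearMap.ker F).subtype) ?_)
        ⟨?_, ?_⟩
      · rintro ⟨p, hp⟩
        exact ((mem_iff p).mp hp).2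
      · rintro ⟨⟨u, x0⟩, hp⟩ ⟨⟨u', x0'⟩, hp'⟩ h
        have h2 : x0 = x0' := congrArg Subtype.val h
        have h1 := ((mem_iff _).mp hp).1
        have h1' := ((mem_iff _).mp hp').1
        subst h2
        exact Subtype.ext (Prod.ext (h1.trans h1'.symm) rfl)
      · rintro ⟨x0, hx0⟩
        refine ⟨⟨(0, x0), (mem_iff _).mpr ⟨rfl, hx0⟩⟩, rfl⟩
    have hker_eq : Module.finrank ℝ (LinearMap.ker F)
        = Module.finrank ℝ (LinearMap.ker M.mulVecLin) := hker.finrank_eq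
    have hrank : M.rank + Module.finrank ℝ (LinearMap.ker M.mulVecLin) = n := by
      have h := LinearMap.finrank_range_add_finrank_ker M.mulVecLin
      rw [Module.finrank_pi] at h
      simpa [Matrix.rank] using h
    omega
end

section
/- (Soundness of direct data-driven control.) Fix n, n_u, n_y ∈ ℕ, matrices A ∈ ℝ^{n×n}, B ∈ ℝ^{n×n_u}, C ∈ ℝ^{n_y×n}, D ∈ ℝ^{n_y×n_u}, and integers T_ini ≥ 1, L ≥ 0, N ≥ T_ini + L + 1. Assume the observability matrix O_{T_ini} has rank n. Let (u^d, y^d) be a trajectory of length N of the LTI system (A,B,C,D). Suppose α ∈ ℝ^{N−T_ini−L} satisfies H_{T_ini+L+1}(u^d) α = (u^ini; ū) and H_{T_ini+L+1}(y^d) α = (y^ini; ȳ), where (u^ini, y^ini) are sequences of length T_ini and (ū, ȳ) are sequences of length L+1. If (u^ini ∧ ū, y^ini ∧ y) is a trajectory of length T_ini + L + 1 of the LTI system (A,B,C,D) for some output sequence y of length L+1 (the actual response of the system initialized by (u^ini, y^ini) and driven by the input ū), then y = ȳ. In particular, for every predicate P on output sequences of length L+1, if P(ȳ) holds then P(y)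 holds. -/
open Matrix

lemma rank_inj {n : ℕ} {m : Type*} [Fintype m] (M : Matrix m (Fin n) ℝ) (h : M.rank = n) :
    Function.Injective M.mulVec := by
  have h2 := LinearMap.finrank_range_add_finrank_ker M.mulVecLin
  rw [Matrix.rank] at h
  rw [h, Module.finrank_fin_fun] at h2
  have hk : Module.finrank ℝ (LinearMap.ker M.mulVecLin) = 0 := by omega
  have hb : LinearMap.ker M.mulVecLin = ⊥ := Submodule.finrank_eq_zero.mp hk
  have hi := LinearMap.ker_eq_bot.mp hb
  intro a b hab
  exact hi (by simpa [Matrix.mulVecLin_apply] using hab)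

lemma mulVec_lincomb {p q M' : ℕ} (A : Matrix (Fin p) (Fin q) ℝ) (c : Fin M' → ℝ)
    (v : Fin M' → Fin q → ℝ) :
    A.mulVec (∑ j, c j • v j) = ∑ j, c j • A.mulVec (v j) := by
  simp only [← Matrix.mulVecLin_apply, map_sum, _root_.map_smul]

/-- Soundness of direct data-driven control: if the observability matrix of depth `T_ini`
has rank `n`, `(u^d, y^d)` is a trajectory of length `N`, and `α` satisfies the Hankel
constraints `H_{T_ini+L+1}(u^d) α = (u^ini; ū)` and `H_{T_ini+L+1}(y^d) α = (y^ini; ȳ)`,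
then the actual response `y` of the system initialized by `(u^ini, y^ini)` and driven by
the input `ū` equals `ȳ` on the horizon; in particular any predicate `P` holding for `ȳ`
also holds for `y`. -/
theorem data_driven_soundness {n nu ny : ℕ}
    (A : Matrix (Fin n) (Fin n) ℝ) (B : Matrix (Fin n) (Fin nu) ℝ)
    (C : Matrix (Fin ny) (Fin n) ℝ) (D : Matrix (Fin ny) (Fin nu) ℝ)
    (Tini L N : ℕ) (hTini : 1 ≤ Tini) (hN : Tini + L + 1 ≤ N)
    (hrank : (obsMat A C Tini).rank = n)
    (ud : ℕ → Fin nu → ℝ) (yd : ℕ → Fin ny → ℝ)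
    (hdata : IsTrajectory A B C D N ud yd)
    (uini : ℕ → Fin nu → ℝ) (yini : ℕ → Fin ny → ℝ)
    (ubar : ℕ → Fin nu → ℝ) (ybar : ℕ → Fin ny → ℝ)
    (α : Fin (N - (Tini + L + 1) + 1) → ℝ)
    (hαu : (hankel (Tini + L + 1) (N - (Tini + L + 1) + 1) ud).mulVec α
      = (fun p => concat Tini uini ubar (p.1 : ℕ) p.2))
    (hαy : (hankel (Tini + L + 1) (N - (Tini + L + 1) + 1) yd).mulVec α
      = (fun p => concat Tini yini ybar (p.1 : ℕ) p.2))
    (y : ℕ → Fin ny → ℝ)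
    (hy : IsTrajectory A B C D (Tini + L + 1)
      (concat Tini uini ubar) (concat Tini yini y)) :
    (∀ t ≤ L, y t = ybar t) ∧
    ∀ P : (Fin (L + 1) → Fin ny → ℝ) → Prop,
      P (fun t k => ybar (t : ℕ) k) → P (fun t k => y (t : ℕ) k) := by
  obtain ⟨xd, hxd, hyd⟩ := hdata
  -- pointwise consequences of the Hankel equations
  have huc : ∀ t, t < Tini + L + 1 →
      (∑ j, α j • ud (t + (j : ℕ))) = concat Tini uini ubar t := by
    intro t ht
    funext k
    have h := congrFun hαu (⟨⟨t, ht⟩, k⟩ : Fin (Tini + L + 1) × Fin nu)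
    simp only [Matrix.mulVec, dotProduct, hankel, Matrix.of_apply] at h
    simpa [Finset.sum_apply, mul_comm] using h
  have hyc : ∀ t, t < Tini + L + 1 →
      (∑ j, α j • yd (t + (j : ℕ))) = concat Tini yini ybar t := by
    intro t ht
    funext k
    have h := congrFun hαy (⟨⟨t, ht⟩, k⟩ : Fin (Tini + L + 1) × Fin ny)
    simp only [Matrix.mulVec, dotProduct, hankel, Matrix.of_apply] at h
    simpa [Finset.sum_apply, mul_comm] using h
  -- the combined sequences form a trajectory
  have htrajb : IsTrajectory A B C D (Tini + L + 1)
      (concat Tini uini ubar) (concat Tini yini ybar) := by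
    refine ⟨fun t => ∑ j, α j • xd (t + (j : ℕ)), ?_, ?_⟩
    · intro t ht
      have hrec : ∀ j : Fin (N - (Tini + L + 1) + 1),
          xd (t + 1 + (j : ℕ)) = A.mulVec (xd (t + (j : ℕ))) + B.mulVec (ud (t + (j : ℕ))) := by
        intro j
        have hj : (j : ℕ) ≤ N - (Tini + L + 1) := Nat.lt_succ_iff.mp j.isLt
        have hlt : t + (j : ℕ) + 1 < N := by omega
        rw [show t + 1 + (j : ℕ) = t + (j : ℕ) + 1 by ring]
        exact hxd _ hlt
      calc (∑ j, α j • xd (t + 1 + (j : ℕ)))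
          = ∑ j, (α j • A.mulVec (xd (t + (j : ℕ))) + α j • B.mulVec (ud (t + (j : ℕ)))) := by
            simp_rw [hrec, smul_add]
        _ = A.mulVec (∑ j, α j • xd (t + (j : ℕ))) + B.mulVec (∑ j, α j • ud (t + (j : ℕ))) := by
            rw [Finset.sum_add_distrib, mulVec_lincomb, mulVec_lincomb]
        _ = _ := by rw [huc t (by omega)]
    · intro t ht
      rw [← hyc t ht, ← huc t ht]
      have hrec : ∀ j : Fin (N - (Tini + L + 1) + 1),
          yd (t + (j : ℕ)) = C.mulVec (xd (t + (j : ℕ))) + D.mulVec (ud (t + (j : ℕ))) := by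
        intro j
        have hj : (j : ℕ) ≤ N - (Tini + L + 1) := Nat.lt_succ_iff.mp j.isLt
        exact hyd _ (by omega)
      simp_rw [hrec, smul_add]
      rw [mulVec_lincomb, mulVec_lincomb, ← Finset.sum_add_distrib]
  obtain ⟨x, hx, hyx⟩ := hy
  obtain ⟨xb, hxb, hyxb⟩ := htrajb
  set e : ℕ → Fin n → ℝ := fun t => x t - xb t with he
  have heA : ∀ t, t + 1 < Tini + L + 1 → e (t + 1) = A.mulVec (e t) := by
    intro t ht
    simp only [he, hx t ht, hxb t ht, Matrix.mulVec_sub]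
    abel
  have hpow : ∀ t, t ≤ Tini + L → e t = (A ^ t).mulVec (e 0) := by
    intro t
    induction t with
    | zero => intro _; simp [Matrix.one_mulVec]
    | succ s ih =>
      intro hst
      rw [heA s (by omega), ih (by omega), Matrix.mulVec_mulVec, ← pow_succ']
  have hCe : ∀ t, t < Tini → C.mulVec (e t) = 0 := by
    intro t ht
    have h1 := hyx t (by omega)
    have h2 := hyxb t (by omega)
    have h3 : concat Tini yini y t = concat Tini yini ybar t := by
      simp [concat, if_pos ht]
    rw [h3, h2] at h1
    simp only [he, Matrix.mulVec_sub]
    have := add_right_cancel h1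
    rw [this]
    abel
  have hO : (obsMat A C Tini).mulVec (e 0) = 0 := by
    funext p
    obtain ⟨i, k⟩ := p
    have h1 : e (i : ℕ) = (A ^ (i : ℕ)).mulVec (e 0) := hpow i (by omega)
    have h2 := hCe i i.isLt
    have h3 : ((obsMat A C Tini).mulVec (e 0)) (i, k) = ((C * A ^ (i : ℕ)).mulVec (e 0)) k := by
      simp [obsMat, Matrix.mulVec, dotProduct]
    rw [h3, ← Matrix.mulVec_mulVec, ← h1, h2]
    rfl
  have he0 : e 0 = 0 := by
    have hi := rank_inj (obsMat A C Tini) hrank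
    apply hi
    rw [hO, Matrix.mulVec_zero]
  have hxeq : ∀ t, t < Tini + L + 1 → x t = xb t := by
    intro t ht
    have : e t = 0 := by rw [hpow t (by omega), he0, Matrix.mulVec_zero]
    have := sub_eq_zero.mp this
    exact this
  have houteq : ∀ t, t < Tini + L + 1 → concat Tini yini y t = concat Tini yini ybar t := by
    intro t ht
    rw [hyx t ht, hyxb t ht, hxeq t ht]
  have hmain : ∀ t ≤ L, y t = ybar t := by
    intro t htL
    have h := houteq (Tini + t) (by omega)
    simpa [concat, if_neg (by omega : ¬ Tini + t < Tini), Nat.add_sub_cancel_left] using h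
  refine ⟨hmain, ?_⟩
  intro P hP
  have hfun : (fun (t : Fin (L + 1)) (k : Fin ny) => y (t : ℕ) k)
      = fun (t : Fin (L + 1)) (k : Fin ny) => ybar (t : ℕ) k := by
    funext t k
    rw [hmain t (Nat.lt_succ_iff.mp t.isLt)]
  rw [hfun]
  exact hP
end

section
/- (Completeness of the data-driven feasibility problem.) Fix n, n_u, n_y ∈ ℕ, matrices A ∈ ℝ^{n×n}, B ∈ ℝ^{n×n_u}, C ∈ ℝ^{n_y×n}, D ∈ ℝ^{n_y×n_u}, with (A,B) controllable, and integers T_ini ≥ 0, L ≥ 0, N ≥ T_ini + L + 1. Let (u^d, y^d) be a trajectory of length N of the LTI system (A,B,C,D) such that u^d is persistently exciting of order T_ini + L + 1 + n. Then for every trajectory (u^ini ∧ ū, y^ini ∧ ȳ) of length T_ini + L + 1 of the LTI system (A,B,C,D) (with (u^ini, y^ini) of length T_ini and (ū, ȳ) of length L+1), there exists α ∈ ℝ^{N−T_ini−L} such that H_{T_ini+L+1}(u^d) α = (u^ini; ū) and H_{T_ini+L+1}(y^d) α = (y^ini; ȳ). In particular, if there exists an input ū whose corresponding output ȳ satisfies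 a given specification, then the data-driven constraints admit a feasible solution producing exactly that input-output pair. -/
open Matrix

/- ### auxiliary lemmas -/

lemma vecMul_ker_of_rank {I J : Type*} [Fintype I] [Fintype J] [DecidableEq I]
    (M : Matrix I J ℝ) (h : M.rank = Fintype.card I) :
    ∀ v, M.vecMul v = 0 → v = 0 := by
  intro v hv
  have hrank : Mᵀ.rank = Fintype.card I := by rw [Matrix.rank_transpose]; exact h
  have hrn := LinearMap.finrank_range_add_finrank_ker (Mᵀ.mulVecLin)
  rw [Module.finrank_pi] at hrn
  have hr : Module.finrank ℝ ↥(LinearMap.range Mᵀ.mulVecLin) = Fintype.card I := hrank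
  have hker0 : Module.finrank ℝ ↥(LinearMap.ker Mᵀ.mulVecLin) = 0 := by omega
  have hker : LinearMap.ker Mᵀ.mulVecLin = ⊥ := Submodule.finrank_eq_zero.mp hker0
  have hvmem : v ∈ LinearMap.ker Mᵀ.mulVecLin := by
    rw [LinearMap.mem_ker, Matrix.mulVecLin_apply, Matrix.mulVec_transpose]
    exact hv
  rw [hker] at hvmem
  exact hvmem

lemma surj_of_vecMul_ker {I J : Type*} [Fintype I] [Fintype J] [DecidableEq I] [DecidableEq J]
    (M : Matrix I J ℝ) (h : ∀ v, M.vecMul v = 0 → v = 0) :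
    Function.Surjective M.mulVec := by
  have hinj : Function.Injective Mᵀ.mulVecLin := by
    rw [← LinearMap.ker_eq_bot, LinearMap.ker_eq_bot']
    intro v hv
    exact h v (by simpa [Matrix.mulVec_transpose] using hv)
  have h1 : Mᵀ.rank = Fintype.card I := by
    show Module.finrank ℝ ↥(LinearMap.range Mᵀ.mulVecLin) = _
    rw [LinearMap.finrank_range_of_inj hinj, Module.finrank_pi]
  have h2 : M.rank = Fintype.card I := by rw [← Matrix.rank_transpose]; exact h1
  have h3 : LinearMap.range M.mulVecLin = ⊤ := by
    apply Submodule.eq_top_of_finrank_eq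
    rw [Module.finrank_pi]
    exact h2
  intro b
  obtain ⟨a, ha⟩ := LinearMap.range_eq_top.mp h3 b
  exact ⟨a, by simpa [Matrix.mulVecLin_apply] using ha⟩

lemma dot_sum {J : Type*} [Fintype J] {ι : Type*} (s : Finset ι) (v : J → ℝ) (f : ι → J → ℝ) :
    v ⬝ᵥ (∑ i ∈ s, f i) = ∑ i ∈ s, v ⬝ᵥ f i := by
  simp only [dotProduct, Finset.sum_apply, Finset.mul_sum]
  rw [Finset.sum_comm]

lemma dot_sum_left {J : Type*} [Fintype J] {ι : Type*} (s : Finset ι) (v : J → ℝ)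
    (f : ι → J → ℝ) : (∑ i ∈ s, f i) ⬝ᵥ v = ∑ i ∈ s, f i ⬝ᵥ v := by
  simp only [dotProduct, Finset.sum_apply, Finset.sum_mul]
  rw [Finset.sum_comm]

lemma vecMul_sum' {a b : ℕ} {ι : Type*} (s : Finset ι) (v : Fin a → ℝ)
    (M : ι → Matrix (Fin a) (Fin b) ℝ) :
    Matrix.vecMul v (∑ i ∈ s, M i) = ∑ i ∈ s, Matrix.vecMul v (M i) := by
  induction s using Finset.cons_induction with
  | empty => simp
  | cons i s hi ih => simp [Finset.sum_cons, Matrix.vecMul_add, ih]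

lemma vecMul_smul' {a b : ℕ} (v : Fin a → ℝ) (c : ℝ) (M : Matrix (Fin a) (Fin b) ℝ) :
    Matrix.vecMul v (c • M) = c • Matrix.vecMul v M := by
  funext j
  simp only [Matrix.vecMul, dotProduct, Matrix.smul_apply, Pi.smul_apply, smul_eq_mul,
    Finset.mul_sum]
  exact Finset.sum_congr rfl fun i _ => by ring

lemma helper_swap {a b m : ℕ} (M : Matrix (Fin a) (Fin b) ℝ) (z : Fin m → Fin b → ℝ)
    (v : Fin m → ℝ) :
    (fun i => ∑ j, (M.mulVec (z j)) i * v j) = M.mulVec (fun s => ∑ j, z j s * v j) := by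
  funext i
  simp only [Matrix.mulVec, dotProduct, Finset.sum_mul, Finset.mul_sum]
  rw [Finset.sum_comm]
  exact Finset.sum_congr rfl fun s _ => Finset.sum_congr rfl fun j _ => by ring

lemma big_identity {nu : ℕ} (ℓ n : ℕ) (hℓ : 1 ≤ ℓ) (a : ℕ → ℝ) (f g u : ℕ → Fin nu → ℝ)
    (hf : ∀ r, ℓ ≤ r → f r = 0) (j : ℕ) :
    ∑ s ∈ Finset.range (ℓ + n),
        (fun q => ∑ k ∈ Finset.range (n + 1),
          if k ≤ s then a k * f (s - k) q else a k * g (k - 1 - s) q) ⬝ᵥ u (s + j)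
      = ∑ k ∈ Finset.range (n + 1),
          a k * ((∑ r ∈ Finset.range ℓ, f r ⬝ᵥ u (k + r + j))
            + ∑ i ∈ Finset.range k, g (k - 1 - i) ⬝ᵥ u (i + j)) := by
  have hL : ∀ s ∈ Finset.range (ℓ + n),
      (fun q => ∑ k ∈ Finset.range (n + 1),
          if k ≤ s then a k * f (s - k) q else a k * g (k - 1 - s) q) ⬝ᵥ u (s + j)
      = ∑ k ∈ Finset.range (n + 1),
          (if k ≤ s then a k * (f (s - k) ⬝ᵥ u (s + j))
            else a k * (g (k - 1 - s) ⬝ᵥ u (s + j))) := by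
    intro s _
    simp only [dotProduct, Finset.sum_mul]
    rw [Finset.sum_comm]
    refine Finset.sum_congr rfl fun k _ => ?_
    by_cases h : k ≤ s
    · simp only [if_pos h, Finset.mul_sum]
      exact Finset.sum_congr rfl fun q _ => by ring
    · simp only [if_neg h, Finset.mul_sum]
      exact Finset.sum_congr rfl fun q _ => by ring
  rw [Finset.sum_congr rfl hL, Finset.sum_comm]
  refine Finset.sum_congr rfl fun k hk => ?_
  rw [Finset.mem_range] at hk
  have hk' : k ≤ ℓ + n := by omega
  rw [Finset.range_eq_Ico, ← Finset.sum_Ico_consecutive _ (Nat.zero_le k) hk']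
  have h1 : ∑ s ∈ Finset.Ico 0 k,
      (if k ≤ s then a k * (f (s - k) ⬝ᵥ u (s + j)) else a k * (g (k - 1 - s) ⬝ᵥ u (s + j)))
      = ∑ i ∈ Finset.range k, a k * (g (k - 1 - i) ⬝ᵥ u (i + j)) := by
    rw [← Finset.range_eq_Ico]
    refine Finset.sum_congr rfl fun s hs => ?_
    rw [Finset.mem_range] at hs
    rw [if_neg (by omega)]
  have h2 : ∑ s ∈ Finset.Ico k (ℓ + n),
      (if k ≤ s then a k * (f (s - k) ⬝ᵥ u (s + j)) else a k * (g (k - 1 - s) ⬝ᵥ u (s + j)))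
      = ∑ r ∈ Finset.range ℓ, a k * (f r ⬝ᵥ u (k + r + j)) := by
    rw [Finset.sum_Ico_eq_sum_range]
    have h3 : ∀ r ∈ Finset.range (ℓ + n - k),
        (if k ≤ k + r then a k * (f (k + r - k) ⬝ᵥ u (k + r + j))
          else a k * (g (k - 1 - (k + r)) ⬝ᵥ u (k + r + j)))
        = a k * (f r ⬝ᵥ u (k + r + j)) := by
      intro r _
      rw [if_pos (Nat.le_add_right k r), Nat.add_sub_cancel_left]
    rw [Finset.sum_congr rfl h3]
    refine (Finset.sum_subset (Finset.range_subset_range.mpr (by omega)) ?_).symm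
    intro r _ hr
    rw [Finset.mem_range, not_lt] at hr
    rw [hf r hr]
    simp
  rw [h1, h2]
  simp only [mul_add, Finset.mul_sum, ← Finset.range_eq_Ico]
  exact add_comm _ _

lemma charpoly_sum (n : ℕ) (A : Matrix (Fin n) (Fin n) ℝ) :
    (∑ k ∈ Finset.range (n + 1), A.charpoly.coeff k • A ^ k = 0)
      ∧ A.charpoly.coeff n = 1 := by
  have hdeg : A.charpoly.natDegree = n := by
    rw [Matrix.charpoly_natDegree_eq_dim]; simp
  constructor
  · have h := Polynomial.aeval_eq_sum_range (R := ℝ) (p := A.charpoly) A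
    rw [hdeg, Matrix.aeval_self_charpoly] at h
    exact h.symm
  · have h := A.charpoly_monic.coeff_natDegree
    rwa [hdeg] at h

lemma state_sol {n nu : ℕ} (A : Matrix (Fin n) (Fin n) ℝ) (B : Matrix (Fin n) (Fin nu) ℝ)
    (N : ℕ) (ud : ℕ → Fin nu → ℝ) (xd : ℕ → Fin n → ℝ)
    (hdx : ∀ t, t + 1 < N → xd (t + 1) = A.mulVec (xd t) + B.mulVec (ud t)) :
    ∀ k c, c + k < N → xd (c + k) = (A ^ k).mulVec (xd c)
      + ∑ i ∈ Finset.range k, ((A ^ (k - 1 - i)) * B).mulVec (ud (c + i)) := by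
  intro k
  induction k with
  | zero => intro c _; simp [Matrix.one_mulVec]
  | succ k ih =>
    intro c hc
    have h1 : c + k + 1 < N := by omega
    have hrec := hdx (c + k) h1
    have h2 := ih c (by omega)
    have h3 : c + (k + 1) = (c + k) + 1 := rfl
    rw [h3, hrec, h2, Finset.sum_range_succ]
    rw [Matrix.mulVec_add]
    have h4 : A.mulVec ((A ^ k).mulVec (xd c)) = (A ^ (k + 1)).mulVec (xd c) := by
      rw [Matrix.mulVec_mulVec, ← pow_succ']
    have h5 : A.mulVec (∑ i ∈ Finset.range k, ((A ^ (k - 1 - i)) * B).mulVec (ud (c + i)))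
        = ∑ i ∈ Finset.range k, ((A ^ (k + 1 - 1 - i)) * B).mulVec (ud (c + i)) := by
      rw [show A.mulVec (∑ i ∈ Finset.range k, ((A ^ (k - 1 - i)) * B).mulVec (ud (c + i)))
          = ∑ i ∈ Finset.range k, A.mulVec (((A ^ (k - 1 - i)) * B).mulVec (ud (c + i))) from by
        rw [← Matrix.mulVecLin_apply, map_sum]; simp [Matrix.mulVecLin_apply]]
      refine Finset.sum_congr rfl fun i hi => ?_
      rw [Finset.mem_range] at hi
      rw [Matrix.mulVec_mulVec, ← Matrix.mul_assoc, ← pow_succ',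
        show k - 1 - i + 1 = k + 1 - 1 - i from by omega]
    rw [h4, h5]
    have h6 : (A ^ (k + 1 - 1 - k)) * B = B := by simp
    rw [add_assoc]
    congr 1
    congr 1
    rw [h6]

/-- Completeness of the data-driven feasibility problem: if `(A, B)` is controllable,
`(u^d, y^d)` is a trajectory of length `N`, and `u^d` is persistently exciting of order
`T_ini + L + 1 + n`, then every trajectory `(u^ini ∧ ū, y^ini ∧ ȳ)` of length
`T_ini + L + 1` of the system can be reproduced by the data-driven constraints: there
exists `α` with `H_{T_ini+L+1}(u^d) α = (u^ini; ū)` and `H_{T_ini+L+1}(y^d) α = (y^ini; ȳ)`. -/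
theorem data_driven_completeness {n nu ny : ℕ}
    (A : Matrix (Fin n) (Fin n) ℝ) (B : Matrix (Fin n) (Fin nu) ℝ)
    (C : Matrix (Fin ny) (Fin n) ℝ) (D : Matrix (Fin ny) (Fin nu) ℝ)
    (hctrb : (ctrbMat A B).rank = n)
    (Tini L N : ℕ) (hN : Tini + L + 1 ≤ N)
    (ud : ℕ → Fin nu → ℝ) (yd : ℕ → Fin ny → ℝ)
    (hdata : IsTrajectory A B C D N ud yd)
    (hPE : (hankel (Tini + L + 1 + n) (N - (Tini + L + 1 + n) + 1) ud).rank
      = (Tini + L + 1 + n) * nu)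
    (uini : ℕ → Fin nu → ℝ) (yini : ℕ → Fin ny → ℝ)
    (ubar : ℕ → Fin nu → ℝ) (ybar : ℕ → Fin ny → ℝ)
    (htraj : IsTrajectory A B C D (Tini + L + 1)
      (concat Tini uini ubar) (concat Tini yini ybar)) :
    ∃ α : Fin (N - (Tini + L + 1) + 1) → ℝ,
      (hankel (Tini + L + 1) (N - (Tini + L + 1) + 1) ud).mulVec α
        = (fun p => concat Tini uini ubar (p.1 : ℕ) p.2) ∧
      (hankel (Tini + L + 1) (N - (Tini + L + 1) + 1) yd).mulVec α
        = (fun p => concat Tini yini ybar (p.1 : ℕ) p.2) := by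
  obtain ⟨xd, hdx, hdy⟩ := hdata
  obtain ⟨x, hx, hy⟩ := htraj
  set u : ℕ → Fin nu → ℝ := concat Tini uini ubar with hu_def
  set y : ℕ → Fin ny → ℝ := concat Tini yini ybar with hy_def
  set ℓ : ℕ := Tini + L + 1 with hldef
  have hl1 : 1 ≤ ℓ := by omega
  set m : ℕ := N - ℓ + 1 with hmdef
  rcases Nat.eq_zero_or_pos nu with hnu | hnu
  · -- trivial case: no inputs forces `n = 0`
    subst hnu
    have hn0 : n = 0 := by
      have h := Matrix.rank_le_card_width (ctrbMat A B)
      rw [hctrb] at h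
      simpa using h
    subst hn0
    refine ⟨0, ?_, ?_⟩
    · funext p
      exact p.2.elim0
    · funext p
      simp only [Matrix.mulVec_zero, Pi.zero_apply]
      rw [hy ↑p.1 p.1.isLt]
      simp [Matrix.mulVec, dotProduct]
  -- main case
  have hN2 : ℓ + n ≤ N := by
    have h := Matrix.rank_le_card_width (hankel (ℓ + n) (N - (ℓ + n) + 1) ud)
    rw [hPE] at h
    simp only [Fintype.card_fin] at h
    have h2 : ℓ + n ≤ (ℓ + n) * nu := Nat.le_mul_of_pos_right _ hnu
    omega
  obtain ⟨hCH, han⟩ := charpoly_sum n A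
  set G : Matrix ((Fin ℓ × Fin nu) ⊕ Fin n) (Fin m) ℝ :=
    Matrix.of (Sum.elim (fun p (j : Fin m) => ud (↑p.1 + ↑j) p.2)
      (fun i (j : Fin m) => xd ↑j i)) with hGdef
  have hker : ∀ ξ : ((Fin ℓ × Fin nu) ⊕ Fin n) → ℝ, G.vecMul ξ = 0 → ξ = 0 := by
    intro ξ hξ
    set ξ1' : ℕ → Fin nu → ℝ :=
      fun r q => if h : r < ℓ then ξ (Sum.inl (⟨r, h⟩, q)) else 0 with hx1def
    set ξ2 : Fin n → ℝ := fun i => ξ (Sum.inr i) with hx2def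
    set w : ℕ → Fin nu → ℝ := fun d => Matrix.vecMul ξ2 ((A ^ d) * B) with hwdef
    have hx1top : ∀ r, ℓ ≤ r → ξ1' r = 0 := by
      intro r hr
      funext q
      rw [hx1def]
      exact dif_neg (by omega)
    -- the basic left-kernel relation, one per column of `G`
    have hR : ∀ c, c + ℓ ≤ N →
        (∑ r ∈ Finset.range ℓ, ξ1' r ⬝ᵥ ud (r + c)) + ξ2 ⬝ᵥ xd c = 0 := by
      intro c hc
      have hcm : c < m := by omega
      have h0 := congrFun hξ ⟨c, hcm⟩
      rw [Pi.zero_apply] at h0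
      rw [← h0]
      have e1 : G.vecMul ξ ⟨c, hcm⟩
          = (∑ p : Fin ℓ × Fin nu, ξ (Sum.inl p) * ud (↑p.1 + c) p.2)
            + ∑ i : Fin n, ξ (Sum.inr i) * xd c i := by
        simp only [Matrix.vecMul, dotProduct, hGdef, Matrix.of_apply]
        rw [Fintype.sum_sum_type]
        rfl
      rw [e1]
      congr 1
      rw [Fintype.sum_prod_type, ← Fin.sum_univ_eq_sum_range (fun r => ξ1' r ⬝ᵥ ud (r + c)) ℓ]
      refine Finset.sum_congr rfl fun r _ => ?_
      simp only [dotProduct, hx1def, dif_pos r.isLt, Fin.eta]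
    -- the lifted kernel vector of the deep Hankel matrix
    have hηH : (hankel (ℓ + n) (N - (ℓ + n) + 1) ud).vecMul
        (fun p : Fin (ℓ + n) × Fin nu => ∑ k ∈ Finset.range (n + 1),
          if k ≤ (↑p.1 : ℕ) then A.charpoly.coeff k * ξ1' (↑p.1 - k) p.2
          else A.charpoly.coeff k * w (k - 1 - ↑p.1) p.2) = 0 := by
      funext j
      have hj := j.isLt
      rw [Pi.zero_apply]
      have e1 : (hankel (ℓ + n) (N - (ℓ + n) + 1) ud).vecMul
          (fun p : Fin (ℓ + n) × Fin nu => ∑ k ∈ Finset.range (n + 1),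
            if k ≤ (↑p.1 : ℕ) then A.charpoly.coeff k * ξ1' (↑p.1 - k) p.2
            else A.charpoly.coeff k * w (k - 1 - ↑p.1) p.2) j
          = ∑ s ∈ Finset.range (ℓ + n),
              (fun q => ∑ k ∈ Finset.range (n + 1),
                if k ≤ s then A.charpoly.coeff k * ξ1' (s - k) q
                else A.charpoly.coeff k * w (k - 1 - s) q) ⬝ᵥ ud (s + ↑j) := by
        simp only [Matrix.vecMul, dotProduct, hankel, Matrix.of_apply]
        rw [Fintype.sum_prod_type]
        exact Fin.sum_univ_eq_sum_range (fun s => ∑ q : Fin nu,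
          (∑ k ∈ Finset.range (n + 1), if k ≤ s then A.charpoly.coeff k * ξ1' (s - k) q
            else A.charpoly.coeff k * w (k - 1 - s) q) * ud (s + ↑j) q) (ℓ + n)
      rw [e1, big_identity ℓ n hl1 A.charpoly.coeff ξ1' w ud hx1top ↑j]
      have hterm : ∀ k ∈ Finset.range (n + 1),
          A.charpoly.coeff k * ((∑ r ∈ Finset.range ℓ, ξ1' r ⬝ᵥ ud (k + r + ↑j))
            + ∑ i ∈ Finset.range k, w (k - 1 - i) ⬝ᵥ ud (i + ↑j))
          = A.charpoly.coeff k * (-(Matrix.vecMul ξ2 (A ^ k) ⬝ᵥ xd ↑j)) := by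
        intro k hk
        rw [Finset.mem_range] at hk
        congr 1
        have hc : (↑j + k) + ℓ ≤ N := by omega
        have hRk := hR (↑j + k) hc
        have hsol := state_sol A B N ud xd hdx k ↑j (by omega)
        have hdot : ξ2 ⬝ᵥ xd (↑j + k)
            = Matrix.vecMul ξ2 (A ^ k) ⬝ᵥ xd ↑j
              + ∑ i ∈ Finset.range k, w (k - 1 - i) ⬝ᵥ ud (↑j + i) := by
          rw [hsol, dotProduct_add, Matrix.dotProduct_mulVec]
          congr 1
          rw [dot_sum]
          refine Finset.sum_congr rfl fun i _ => ?_
          rw [Matrix.dotProduct_mulVec]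
        have e2 : ∑ r ∈ Finset.range ℓ, ξ1' r ⬝ᵥ ud (k + r + ↑j)
            = ∑ r ∈ Finset.range ℓ, ξ1' r ⬝ᵥ ud (r + (↑j + k)) :=
          Finset.sum_congr rfl fun r _ => by
            rw [show k + r + ↑j = r + (↑j + k) from by omega]
        have e3 : ∑ i ∈ Finset.range k, w (k - 1 - i) ⬝ᵥ ud (i + ↑j)
            = ∑ i ∈ Finset.range k, w (k - 1 - i) ⬝ᵥ ud (↑j + i) :=
          Finset.sum_congr rfl fun i _ => by rw [Nat.add_comm]
        rw [e2, e3]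
        linarith [hRk, hdot]
      rw [Finset.sum_congr rfl hterm]
      have hsum0 : ∑ k ∈ Finset.range (n + 1),
          A.charpoly.coeff k * (Matrix.vecMul ξ2 (A ^ k) ⬝ᵥ xd ↑j) = 0 := by
        have e4 : ∀ k ∈ Finset.range (n + 1),
            A.charpoly.coeff k * (Matrix.vecMul ξ2 (A ^ k) ⬝ᵥ xd ↑j)
            = Matrix.vecMul ξ2 (A.charpoly.coeff k • A ^ k) ⬝ᵥ xd ↑j := by
          intro k _
          rw [vecMul_smul', smul_dotProduct, smul_eq_mul]
        rw [Finset.sum_congr rfl e4, ← dot_sum_left, ← vecMul_sum', hCH,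
          Matrix.vecMul_zero, zero_dotProduct]
      simp only [mul_neg]
      rw [Finset.sum_neg_distrib, hsum0, neg_zero]
    -- conclude each entry of the lifted kernel vector vanishes
    have hrank : (hankel (ℓ + n) (N - (ℓ + n) + 1) ud).rank
        = Fintype.card (Fin (ℓ + n) × Fin nu) := by
      rw [hPE]; simp
    have hηz := vecMul_ker_of_rank _ hrank _ hηH
    have hη0 : ∀ s q, s < ℓ + n → ∑ k ∈ Finset.range (n + 1),
        (if k ≤ s then A.charpoly.coeff k * ξ1' (s - k) q
          else A.charpoly.coeff k * w (k - 1 - s) q) = 0 := by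
      intro s q hs
      have := congrFun hηz (⟨s, hs⟩, q)
      simpa using this
    -- downward induction: the `ξ1` part vanishes
    have hx1z : ∀ d r, ℓ - r ≤ d → ξ1' r = 0 := by
      intro d
      induction d with
      | zero => intro r hr; exact hx1top r (by omega)
      | succ d ih =>
        intro r hr
        by_cases hrl : ℓ ≤ r
        · exact hx1top r hrl
        · funext q
          have h0 := hη0 (r + n) q (by omega)
          have e : ∀ k ∈ Finset.range (n + 1),
              (if k ≤ r + n then A.charpoly.coeff k * ξ1' (r + n - k) q
                else A.charpoly.coeff k * w (k - 1 - (r + n)) q)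
              = A.charpoly.coeff k * ξ1' (r + n - k) q := by
            intro k hk
            rw [Finset.mem_range] at hk
            exact if_pos (by omega)
          rw [Finset.sum_congr rfl e, Finset.sum_range_succ] at h0
          have e2 : ∀ k ∈ Finset.range n, A.charpoly.coeff k * ξ1' (r + n - k) q = 0 := by
            intro k hk
            rw [Finset.mem_range] at hk
            rw [ih (r + n - k) (by omega)]
            simp
          rw [Finset.sum_congr rfl e2, Finset.sum_const_zero, zero_add,
            show r + n - n = r from by omega, han, one_mul] at h0
          simpa using h0
    have hx1all : ∀ r, ξ1' r = 0 := fun r => hx1z (ℓ - r) r le_rfl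
    -- downward induction: the controllability part vanishes
    have hwz : ∀ d, d < n → w d = 0 := by
      intro d
      induction d using Nat.strong_induction_on with
      | _ d ih =>
        intro hdn
        funext q
        have h0 := hη0 (n - 1 - d) q (by omega)
        have e : ∀ k ∈ Finset.range (n + 1),
            (if k ≤ n - 1 - d then A.charpoly.coeff k * ξ1' (n - 1 - d - k) q
              else A.charpoly.coeff k * w (k - 1 - (n - 1 - d)) q)
            = (if k ≤ n - 1 - d then 0
              else A.charpoly.coeff k * w (k - 1 - (n - 1 - d)) q) := by
          intro k _
          by_cases h : k ≤ n - 1 - d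
          · rw [if_pos h, if_pos h, hx1all]; simp
          · rw [if_neg h, if_neg h]
        rw [Finset.sum_congr rfl e, Finset.range_eq_Ico,
          ← Finset.sum_Ico_consecutive _ (Nat.zero_le (n - 1 - d + 1))
            (show n - 1 - d + 1 ≤ n + 1 from by omega)] at h0
        have e1 : ∑ k ∈ Finset.Ico 0 (n - 1 - d + 1),
            (if k ≤ n - 1 - d then (0 : ℝ)
              else A.charpoly.coeff k * w (k - 1 - (n - 1 - d)) q) = 0 := by
          apply Finset.sum_eq_zero
          intro k hk
          rw [Finset.mem_Ico] at hk
          rw [if_pos (by omega)]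
        have e2 : ∑ k ∈ Finset.Ico (n - 1 - d + 1) (n + 1),
            (if k ≤ n - 1 - d then (0 : ℝ)
              else A.charpoly.coeff k * w (k - 1 - (n - 1 - d)) q)
            = ∑ t ∈ Finset.range (d + 1),
                A.charpoly.coeff (n - 1 - d + 1 + t) * w t q := by
          rw [Finset.sum_Ico_eq_sum_range,
            show n + 1 - (n - 1 - d + 1) = d + 1 from by omega]
          refine Finset.sum_congr rfl fun t _ => ?_
          rw [if_neg (by omega), show n - 1 - d + 1 + t - 1 - (n - 1 - d) = t from by omega]
        rw [e1, e2, zero_add, Finset.sum_range_succ] at h0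
        have e3 : ∀ t ∈ Finset.range d,
            A.charpoly.coeff (n - 1 - d + 1 + t) * w t q = 0 := by
          intro t ht
          rw [Finset.mem_range] at ht
          rw [ih t ht (by omega)]
          simp
        rw [Finset.sum_congr rfl e3, Finset.sum_const_zero, zero_add,
          show n - 1 - d + 1 + d = n from by omega, han, one_mul] at h0
        simpa using h0
    -- the state part vanishes via controllability
    have hx2z : ξ2 = 0 := by
      apply vecMul_ker_of_rank (ctrbMat A B) (by rw [hctrb]; simp)
      funext p
      have h1 := congrFun (hwz ↑p.1 p.1.isLt) p.2
      rw [hwdef] at h1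
      simp only [Matrix.vecMul, dotProduct, Pi.zero_apply] at h1 ⊢
      simp only [ctrbMat, Matrix.of_apply]
      simpa using h1
    funext i
    cases i with
    | inl p =>
      have h1 := congrFun (hx1all ↑p.1) p.2
      rw [hx1def] at h1
      simp only [dif_pos p.1.isLt, Fin.eta, Pi.zero_apply] at h1
      simpa using h1
    | inr i =>
      have h1 := congrFun hx2z i
      rw [hx2def] at h1
      simpa using h1
  -- surjectivity of the stacked data matrix
  obtain ⟨α, hα⟩ := surj_of_vecMul_ker G hker
    (Sum.elim (fun p : Fin ℓ × Fin nu => u ↑p.1 p.2) (x 0))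
  have hu : ∀ (t : ℕ), t < ℓ → ∀ q : Fin nu,
      (∑ j : Fin m, ud (t + ↑j) q * α j) = u t q := by
    intro t ht q
    have h1 := congrFun hα (Sum.inl (⟨t, ht⟩, q))
    simpa [Matrix.mulVec, dotProduct, hGdef] using h1
  have hx0 : ∀ i, (∑ j : Fin m, xd ↑j i * α j) = x 0 i := by
    intro i
    have h1 := congrFun hα (Sum.inr i)
    simpa [Matrix.mulVec, dotProduct, hGdef] using h1
  set xh : ℕ → Fin n → ℝ := fun t i => ∑ j : Fin m, xd (t + ↑j) i * α j with hxhdef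
  set uh : ℕ → Fin nu → ℝ := fun t q => ∑ j : Fin m, ud (t + ↑j) q * α j with huhdef
  have huh : ∀ t, t < ℓ → uh t = u t := by
    intro t ht
    funext q
    exact hu t ht q
  have hxh : ∀ t, t < ℓ → xh t = x t := by
    intro t
    induction t with
    | zero =>
      intro _
      funext i
      rw [hxhdef]
      simpa using hx0 i
    | succ t ih =>
      intro ht
      have ht' : t < ℓ := by omega
      have e1 : xh (t + 1) = A.mulVec (xh t) + B.mulVec (uh t) := by
        funext i
        have e2 : ∀ j : Fin m, xd (t + 1 + ↑j) i * α j
            = (A.mulVec (xd (t + ↑j)) + B.mulVec (ud (t + ↑j))) i * α j := by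
          intro j
          have hj := j.isLt
          rw [show t + 1 + ↑j = (t + ↑j) + 1 from by omega, hdx (t + ↑j) (by omega)]
        calc xh (t + 1) i
            = ∑ j : Fin m, (A.mulVec (xd (t + ↑j)) + B.mulVec (ud (t + ↑j))) i * α j :=
              Finset.sum_congr rfl fun j _ => e2 j
          _ = (∑ j : Fin m, (A.mulVec (xd (t + ↑j))) i * α j)
              + ∑ j : Fin m, (B.mulVec (ud (t + ↑j))) i * α j := by
              simp only [Pi.add_apply, add_mul, Finset.sum_add_distrib]
          _ = (A.mulVec (xh t)) i + (B.mulVec (uh t)) i := by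
              rw [congrFun (helper_swap A (fun j : Fin m => xd (t + ↑j)) α) i,
                congrFun (helper_swap B (fun j : Fin m => ud (t + ↑j)) α) i]
          _ = (A.mulVec (xh t) + B.mulVec (uh t)) i := rfl
      rw [e1, ih ht', huh t ht']
      exact (hx t ht).symm
  refine ⟨α, ?_, ?_⟩
  · funext p
    have h1 : (hankel ℓ m ud).mulVec α p = ∑ j : Fin m, ud (↑p.1 + ↑j) p.2 * α j := by
      simp [Matrix.mulVec, dotProduct, hankel]
    rw [h1]
    exact hu ↑p.1 p.1.isLt p.2
  · funext p
    have ht := p.1.isLt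
    have h1 : (hankel ℓ m yd).mulVec α p = ∑ j : Fin m, yd (↑p.1 + ↑j) p.2 * α j := by
      simp [Matrix.mulVec, dotProduct, hankel]
    rw [h1]
    have e2 : ∀ j : Fin m, yd (↑p.1 + ↑j) p.2 * α j
        = (C.mulVec (xd (↑p.1 + ↑j)) + D.mulVec (ud (↑p.1 + ↑j))) p.2 * α j := by
      intro j
      have hj := j.isLt
      rw [hdy (↑p.1 + ↑j) (by omega)]
    calc ∑ j : Fin m, yd (↑p.1 + ↑j) p.2 * α j
        = ∑ j : Fin m, (C.mulVec (xd (↑p.1 + ↑j)) + D.mulVec (ud (↑p.1 + ↑j))) p.2 * α j :=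
          Finset.sum_congr rfl fun j _ => e2 j
      _ = (∑ j : Fin m, (C.mulVec (xd (↑p.1 + ↑j))) p.2 * α j)
          + ∑ j : Fin m, (D.mulVec (ud (↑p.1 + ↑j))) p.2 * α j := by
          simp only [Pi.add_apply, add_mul, Finset.sum_add_distrib]
      _ = (C.mulVec (xh ↑p.1)) p.2 + (D.mulVec (uh ↑p.1)) p.2 := by
          rw [congrFun (helper_swap C (fun j : Fin m => xd (↑p.1 + ↑j)) α) p.2,
            congrFun (helper_swap D (fun j : Fin m => ud (↑p.1 + ↑j)) α) p.2]
      _ = (C.mulVec (x ↑p.1)) p.2 + (D.mulVec (u ↑p.1)) p.2 := by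
          rw [hxh ↑p.1 ht, huh ↑p.1 ht]
      _ = y ↑p.1 p.2 := by rw [hy ↑p.1 ht]; rfl
end
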